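/- arXiv:2311.14842 — 14 statements merged into one kernel-verified Lean document; each statement's English description precedes it below -/
import Mathlib

section
/- Let F be a finite field with q elements and let j ≥ 1 be an integer. Suppose W is a finite set of invertible j×j matrices over F such that for every two distinct matrices W, W' ∈ W the difference W − W' is also invertible. Then |W| ≤ q^j − 1. -/
/-- Let F be a finite field with q elements and let j ≥ 1 be an integer.
Suppose W is a finite set of invertible j×j matrices over F such that for every two
distinct matrices W, W' ∈ W the difference W − W' is also invertible.
Then |W| ≤ q^j − 1. -/
theorem stmt_0 {F : Type*} [Field F] [Fintype F] {q j : ℕ}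
    (hq : Fintype.card F = q) (hj : 1 ≤ j)
    (W : Finset (Matrix (Fin j) (Fin j) F))
    (hinv : ∀ M ∈ W, M.det ≠ 0)
    (hdiff : ∀ M ∈ W, ∀ M' ∈ W, M ≠ M' → (M - M').det ≠ 0) :
    W.card ≤ q ^ j - 1 := by
  classical
  set v : Fin j → F := fun _ => 1 with hv
  have hv0 : v ≠ 0 := by
    intro h
    have := congrFun h ⟨0, hj⟩
    simp [hv] at this
  have hinj : ∀ A : Matrix (Fin j) (Fin j) F, A.det ≠ 0 →
      Function.Injective A.mulVec := fun A hA =>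
    Matrix.mulVec_injective_iff_isUnit.2 ((Matrix.isUnit_iff_isUnit_det A).2 hA.isUnit)
  have hcard : W.card ≤ (Finset.univ.erase (0 : Fin j → F)).card := by
    apply Finset.card_le_card_of_injOn (fun M => M.mulVec v)
    · intro M hM
      refine Finset.mem_erase.2 ⟨?_, Finset.mem_univ _⟩
      intro h
      exact hv0 (hinj M (hinv M hM) (by simpa using h))
    · intro M hM M' hM' h
      by_contra hne
      have hdet := hdiff M hM M' hM' hne
      have : (M - M').mulVec v = 0 := by
        simp only [Matrix.sub_mulVec]; simpa [sub_eq_zero] using h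
      exact hv0 (hinj _ hdet (by simpa using this))
  calc W.card ≤ (Finset.univ.erase (0 : Fin j → F)).card := hcard
    _ = Fintype.card (Fin j → F) - 1 := by
        rw [Finset.card_erase_of_mem (Finset.mem_univ _), Finset.card_univ]
    _ = q ^ j - 1 := by rw [Fintype.card_fun, hq, Fintype.card_fin]
end

section
/- Let s, d, t be positive integers with s > dt, let F be a field, and let C ⊆ F^n be a linear code of dimension ℓ satisfying ℓ·s = n·(s − dt). Let L : [n] → [s] be a labeling (a surjective function) such that every nonzero codeword of C has labelweight at least dt + 1. Then all fibers of L have the same cardinality: |L⁻¹(λ)| = |L⁻¹(λ')| for all λ, λ' ∈ [s]. -/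
/-!
Write `k = d t` and `f λ = |L⁻¹(λ)|`. For every `k`-set `S` of labels, no nonzero codeword is
supported on `L⁻¹(S)`, so restricting `C` to the complement is injective and
`ℓ + ∑_{λ ∈ S} f λ ≤ n`, i.e. `s ∑_{λ ∈ S} f λ ≤ k n` by the rate condition. Averaged over all
`k`-sets the left side is exactly `k n`, so every such inequality is an equality. Two `k`-sets
differing in one label then show that any two fibers have the same size.
-/

open Finset Module

open Classical in
noncomputable def labelWeight {ι F : Type*} [Fintype ι] {s : ℕ} [Zero F]
    (L : ι → Fin s) (c : ι → F) : ℕ :=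
  ((Finset.univ.filter fun i => c i ≠ 0).image L).card

section Averaging

variable {α : Type*} [Fintype α] [DecidableEq α]

theorem Finset.sum_powersetCard_succ_sum {M : Type*} [AddCommMonoid M] (f : α → M) (k : ℕ) :
    ∑ S ∈ powersetCard (k + 1) univ, ∑ a ∈ S, f a
      = (Fintype.card α - 1).choose k • ∑ a, f a := by
  have hcount : ∀ a : α,
      #{S ∈ powersetCard (k + 1) (univ : Finset α) | a ∈ S} = (Fintype.card α - 1).choose k := by
    intro a
    simpa [singleton_subset_iff] using
      card_filter_powersetCard_subset {a} univ (k + 1) (subset_univ _) (by simp)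
  calc ∑ S ∈ powersetCard (k + 1) univ, ∑ a ∈ S, f a
      = ∑ S ∈ powersetCard (k + 1) univ, ∑ a, if a ∈ S then f a else 0 := by
        simp only [sum_ite_mem, univ_inter]
    _ = ∑ a, ∑ S ∈ powersetCard (k + 1) univ, if a ∈ S then f a else 0 := sum_comm
    _ = ∑ a, (Fintype.card α - 1).choose k • f a := by
        simp only [← sum_filter, sum_const, hcount]
    _ = (Fintype.card α - 1).choose k • ∑ a, f a := (smul_sum ..).symm

theorem card_mul_sum_eq_of_forall_card_mul_sum_le (f : α → ℕ) {k : ℕ}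
    (h : ∀ S : Finset α, #S = k → Fintype.card α * ∑ a ∈ S, f a ≤ k * ∑ a, f a)
    {S : Finset α} (hS : #S = k) :
    Fintype.card α * ∑ a ∈ S, f a = k * ∑ a, f a := by
  obtain _ | j := k
  · simp [card_eq_zero.mp hS]
  have hle : ∀ T ∈ powersetCard (j + 1) univ, Fintype.card α * ∑ a ∈ T, f a ≤ (j + 1) * ∑ a, f a :=
    fun T hT => h T (mem_powersetCard.mp hT).2
  have htotal : ∑ T ∈ powersetCard (j + 1) univ, Fintype.card α * ∑ a ∈ T, f a
      = ∑ T ∈ powersetCard (j + 1) (univ : Finset α), (j + 1) * ∑ a, f a := by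
    rcases Nat.eq_zero_or_pos (Fintype.card α) with hm | hm
    · have : powersetCard (j + 1) (univ : Finset α) = ∅ :=
        powersetCard_eq_empty.mpr (by simp [hm])
      simp [this]
    obtain ⟨m', hm'⟩ := Nat.exists_eq_add_one_of_ne_zero hm.ne'
    have hchoose := Nat.add_one_mul_choose_eq m' j
    rw [← mul_sum, sum_powersetCard_succ_sum, sum_const, card_powersetCard, card_univ,
      smul_eq_mul, smul_eq_mul, ← mul_assoc, hm', Nat.add_sub_cancel, hchoose, ← hm']
    ring
  exact (sum_eq_sum_iff_of_le hle).mp htotal S (mem_powersetCard.mpr ⟨subset_univ S, hS⟩)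

theorem eq_of_forall_card_eq_sum_eq {M : Type*} [AddCancelCommMonoid M] (f : α → M) {k : ℕ}
    (hk : 0 < k) (hkα : k < Fintype.card α)
    (h : ∀ S T : Finset α, #S = k → #T = k → ∑ a ∈ S, f a = ∑ a ∈ T, f a) (a b : α) :
    f a = f b := by
  rcases eq_or_ne a b with rfl | hab
  · rfl
  have hcompl : k - 1 ≤ #({a, b}ᶜ : Finset α) := by
    rw [card_compl, card_pair hab]
    omega
  obtain ⟨A, hA, hAcard⟩ := exists_subset_card_eq hcompl
  have haA : a ∉ A := fun ha => by simpa using hA ha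
  have hbA : b ∉ A := fun hb => by simpa using hA hb
  have hexchange := h (insert a A) (insert b A)
    (by rw [card_insert_of_notMem haA]; omega) (by rw [card_insert_of_notMem hbA]; omega)
  rw [sum_insert haA, sum_insert hbA] at hexchange
  exact add_right_cancel hexchange

end Averaging

theorem Submodule.finrank_add_card_le_of_forall_eq_zero {ι F : Type*} [Fintype ι] [Field F]
    (C : Submodule F (ι → F)) (T : Finset ι)
    (h : ∀ c ∈ C, (∀ i ∉ T, c i = 0) → c = 0) :
    finrank F C + #T ≤ Fintype.card ι := by
  classical
  let restrict := LinearMap.funLeft F F (Subtype.val : {i // i ∉ T} → ι) ∘ₗ C.subtype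
  have hinj : Function.Injective restrict := by
    rw [← LinearMap.ker_eq_bot, LinearMap.ker_eq_bot']
    intro c hc
    exact Subtype.ext (h c c.2 fun i hi => congrFun hc ⟨i, hi⟩)
  have hle := LinearMap.finrank_le_finrank_of_injective hinj
  rw [finrank_fintype_fun_eq_card, Fintype.card_subtype_compl, Fintype.card_coe] at hle
  have := card_le_univ T
  omega

theorem labelWeight_le_card_of_forall_eq_zero {ι F : Type*} [Fintype ι] {s : ℕ} [Zero F]
    (L : ι → Fin s) (c : ι → F) (S : Finset (Fin s)) (h : ∀ i, L i ∉ S → c i = 0) :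
    labelWeight L c ≤ #S := by
  classical
  unfold labelWeight
  refine card_le_card fun a ha => ?_
  obtain ⟨i, hi, rfl⟩ := mem_image.mp ha
  by_contra hiS
  exact (mem_filter.mp hi).2 (h i hiS)

theorem finrank_add_card_preimage_le_of_card_lt_labelWeight {ι F : Type*} [Fintype ι] [Field F]
    {s : ℕ} (C : Submodule F (ι → F)) (L : ι → Fin s) (S : Finset (Fin s))
    (h : ∀ c ∈ C, c ≠ 0 → #S < labelWeight L c) :
    finrank F C + #{i | L i ∈ S} ≤ Fintype.card ι := by
  refine C.finrank_add_card_le_of_forall_eq_zero _ fun c hc hzero => ?_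
  by_contra hc0
  refine (h c hc hc0).not_ge (labelWeight_le_card_of_forall_eq_zero L c S fun i hi => ?_)
  exact hzero i (by simpa using hi)

theorem stmt_2_general {F : Type*} [Field F] {n s d t ℓ : ℕ}
    (hd : 0 < d) (ht : 0 < t) (hst : d * t < s)
    (C : Submodule F (Fin n → F)) (hdim : Module.finrank F C = ℓ)
    (hrate : ℓ * s = n * (s - d * t))
    (L : Fin n → Fin s)
    (hwt : ∀ c ∈ C, c ≠ 0 → d * t + 1 ≤ labelWeight L c) :
    ∀ lam lam' : Fin s,
      (Finset.univ.filter fun i => L i = lam).card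
        = (Finset.univ.filter fun i => L i = lam').card := by
  set k := d * t
  set fiber : Fin s → ℕ := fun a => #{i | L i = a}
  have hk : 0 < k := Nat.mul_pos hd ht
  have htotal : ∑ a, fiber a = n := by
    simpa using (card_eq_sum_card_fiberwise (s := univ) (t := univ) (f := L) (by simp)).symm
  have hbound : ∀ S : Finset (Fin s), #S = k → s * ∑ a ∈ S, fiber a ≤ k * ∑ a, fiber a := by
    intro S hS
    have hcode := finrank_add_card_preimage_le_of_card_lt_labelWeight C L S
      fun c hc hc0 => hS ▸ hwt c hc hc0
    rw [hdim, ← sum_card_fiberwise_eq_card_filter, Fintype.card_fin] at hcode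
    rw [htotal]
    zify [hst.le] at hrate hcode ⊢
    nlinarith
  have hequal : ∀ S : Finset (Fin s), #S = k → s * ∑ a ∈ S, fiber a = k * ∑ a, fiber a := by
    intro S hS
    simpa using card_mul_sum_eq_of_forall_card_mul_sum_le fiber (by simpa using hbound) hS
  refine eq_of_forall_card_eq_sum_eq fiber hk (by simpa using hst) fun S T hS hT => ?_
  exact Nat.eq_of_mul_eq_mul_left (hk.trans hst) ((hequal S hS).trans (hequal T hT).symm)

/-- Let s, d, t be positive integers with s > dt, F a field, and C ⊆ F^n a
linear code of dimension ℓ with ℓ·s = n·(s − dt).  If L : [n] → [s] is a surjective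
labeling such that every nonzero codeword of C has labelweight at least dt + 1, then
all fibers of L have the same cardinality. -/
theorem stmt_2 {F : Type*} [Field F] {n s d t ℓ : ℕ}
    (hs : 0 < s) (hd : 0 < d) (ht : 0 < t) (hst : d * t < s)
    (C : Submodule F (Fin n → F)) (hdim : Module.finrank F C = ℓ)
    (hrate : ℓ * s = n * (s - d * t))
    (L : Fin n → Fin s) (hL : Function.Surjective L)
    (hwt : ∀ c ∈ C, c ≠ 0 → d * t + 1 ≤ labelWeight L c) :
    ∀ lam lam' : Fin s,
      (Finset.univ.filter fun i => L i = lam).card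
        = (Finset.univ.filter fun i => L i = lam').card :=
  stmt_2_general hd ht hst C hdim hrate L hwt
end

section
/- Let s, d, t be positive integers with s > dt, let F be a field, and let C ⊆ F^n be a linear code of dimension ℓ satisfying ℓ·s = n·(s − dt). Let L : [n] → [s] be a labeling (a surjective function) such that every nonzero codeword of C has labelweight at least dt + 1. Then s divides n, and setting j = n/s (a positive integer): (i) C has length n = js and dimension ℓ = j(s − dt), and (ii) |L⁻¹(λ)| = j for every λ ∈ [s]. -/
open Finset

theorem Submodule.finrank_add_card_le {ι F : Type*} [Fintype ι] [Field F]
    (C : Submodule F (ι → F)) (T : Finset ι) (hT : ∀ c ∈ C, (∀ i ∉ T, c i = 0) → c = 0) :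
    Module.finrank F C + #T ≤ Fintype.card ι := by
  classical
  let restrict : C →ₗ[F] ({ i // i ∉ T } → F) :=
    (LinearMap.funLeft F F (Subtype.val : { i // i ∉ T } → ι)).comp C.subtype
  have hinj : Function.Injective restrict := by
    rw [injective_iff_map_eq_zero]
    intro c hc
    exact Subtype.ext (hT c c.2 fun i hi => congrFun hc ⟨i, hi⟩)
  have hle := LinearMap.finrank_le_finrank_of_injective hinj
  rw [Module.finrank_fintype_fun_eq_card, Fintype.card_subtype_compl, Fintype.card_coe] at hle
  have := T.card_le_univ
  omega

theorem finrank_add_sum_card_fiber_le {ι F : Type*} [Fintype ι] [Field F] {s : ℕ}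
    (C : Submodule F (ι → F)) (L : ι → Fin s) (S : Finset (Fin s))
    (hwt : ∀ c ∈ C, c ≠ 0 → #S < labelWeight L c) :
    Module.finrank F C + ∑ lam ∈ S, #{i | L i = lam} ≤ Fintype.card ι := by
  classical
  rw [sum_card_fiberwise_eq_card_filter]
  refine C.finrank_add_card_le _ fun c hc hsupp => ?_
  by_contra hc0
  refine (hwt c hc hc0).not_ge (card_le_card fun lam hlam => ?_)
  obtain ⟨i, hi, rfl⟩ := mem_image.1 hlam
  by_contra hiS
  exact (mem_filter.1 hi).2 (hsupp i (by simpa using hiS))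

theorem apply_le_apply_of_sum_le_of_card_eq {ι M : Type*} [DecidableEq ι] [AddCommMonoid M]
    [PartialOrder M] [IsOrderedCancelAddMonoid M] {f : ι → M} {S : Finset ι}
    (hmax : ∀ T : Finset ι, #T = #S → ∑ i ∈ T, f i ≤ ∑ i ∈ S, f i) {a b : ι}
    (ha : a ∈ S) (hb : b ∉ S) : f b ≤ f a := by
  have hb' : b ∉ S.erase a := fun h => hb (mem_of_mem_erase h)
  have hswap := hmax (insert b (S.erase a))
    (by rw [card_insert_of_notMem hb', card_erase_add_one ha])
  rw [sum_insert hb', ← add_sum_erase S f ha] at hswap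
  exact le_of_add_le_add_right hswap

theorem apply_eq_apply_of_card_mul_sum_le_of_forall_le {ι : Type*} [Fintype ι] [DecidableEq ι]
    {f : ι → ℕ} {S : Finset ι} (hS₀ : S.Nonempty) (hSι : #S < Fintype.card ι)
    (hsep : ∀ a ∈ S, ∀ b ∉ S, f b ≤ f a)
    (havg : Fintype.card ι * ∑ i ∈ S, f i ≤ #S * ∑ i, f i) (i j : ι) : f i = f j := by
  set k := #S
  obtain ⟨m, hcard⟩ : ∃ m, Fintype.card ι = k + m := ⟨Fintype.card ι - k, by omega⟩
  have hm : 0 < m := by omega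
  have hSc : #Sᶜ = m := by rw [card_compl]; omega
  obtain ⟨a, ha, hamin⟩ := S.exists_min_image f hS₀
  obtain ⟨b, hb, hbmax⟩ := Sᶜ.exists_max_image f (card_pos.1 (by omega))
  have hlow : k * f a ≤ ∑ x ∈ S, f x := by simpa using card_nsmul_le_sum S f (f a) hamin
  have hup : ∑ x ∈ Sᶜ, f x ≤ m * f b := by simpa [hSc] using sum_le_card_nsmul Sᶜ f (f b) hbmax
  rw [hcard, ← sum_add_sum_compl S f] at havg
  have hchain : m * ∑ x ∈ S, f x ≤ k * ∑ x ∈ Sᶜ, f x ∧ k * ∑ x ∈ Sᶜ, f x ≤ m * (k * f a) := by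
    constructor
    · linarith
    · calc k * ∑ x ∈ Sᶜ, f x ≤ k * (m * f b) := Nat.mul_le_mul_left k hup
        _ ≤ k * (m * f a) := by gcongr; exact hsep a ha b (mem_compl.1 hb)
        _ = m * (k * f a) := by ring
  have hA : ∑ x ∈ S, f x = k * f a :=
    Nat.eq_of_mul_eq_mul_left hm
      (le_antisymm (hchain.1.trans hchain.2) (Nat.mul_le_mul_left m hlow))
  have hB : ∑ x ∈ Sᶜ, f x = m * f a := by
    refine Nat.eq_of_mul_eq_mul_left (card_pos.2 hS₀) (le_antisymm (hchain.2.trans_eq (by ring)) ?_)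
    calc k * (m * f a) = m * ∑ x ∈ S, f x := by rw [hA]; ring
      _ ≤ k * ∑ x ∈ Sᶜ, f x := hchain.1
  have hin : ∀ x ∈ S, f a = f x := (sum_eq_sum_iff_of_le hamin).1 (by simp [hA, k])
  have hout : ∀ x ∈ Sᶜ, f x = f a :=
    (sum_eq_sum_iff_of_le fun x hx => (hbmax x hx).trans (hsep a ha b (mem_compl.1 hb))).1
      (by simp [hB, hSc])
  have hconst : ∀ x, f x = f a := fun x =>
    if hx : x ∈ S then (hin x hx).symm else hout x (mem_compl.2 hx)
  rw [hconst i, hconst j]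

theorem apply_eq_apply_of_card_mul_sum_le {ι : Type*} [Fintype ι] [DecidableEq ι] {f : ι → ℕ}
    {k : ℕ} (hk : 0 < k) (hkι : k < Fintype.card ι)
    (hS : ∀ S : Finset ι, #S = k → Fintype.card ι * ∑ i ∈ S, f i ≤ k * ∑ i, f i) (i j : ι) :
    f i = f j := by
  obtain ⟨S, hSmem, hSmax⟩ := (powersetCard k (univ : Finset ι)).exists_max_image
    (∑ i ∈ ·, f i) (powersetCard_nonempty.2 (by simpa using hkι.le))
  have hSk : #S = k := (mem_powersetCard.1 hSmem).2
  have hsep : ∀ a ∈ S, ∀ b ∉ S, f b ≤ f a := fun a ha b hb =>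
    apply_le_apply_of_sum_le_of_card_eq
      (fun T hT => hSmax T (mem_powersetCard.2 ⟨subset_univ T, hT.trans hSk⟩)) ha hb
  exact apply_eq_apply_of_card_mul_sum_le_of_forall_le (card_pos.1 (hSk ▸ hk)) (hSk ▸ hkι) hsep
    (hSk ▸ hS S hSk) i j

theorem stmt_3_general {F : Type*} [Field F] {n s d t ℓ : ℕ}
    (hd : 0 < d) (ht : 0 < t) (hst : d * t < s)
    (C : Submodule F (Fin n → F)) (hdim : Module.finrank F C = ℓ)
    (hrate : ℓ * s = n * (s - d * t))
    (L : Fin n → Fin s) (hL : Function.Surjective L)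
    (hwt : ∀ c ∈ C, c ≠ 0 → d * t + 1 ≤ labelWeight L c) :
    s ∣ n ∧ 0 < n / s ∧ ℓ = (n / s) * (s - d * t) ∧
      ∀ lam : Fin s, (Finset.univ.filter fun i => L i = lam).card = n / s := by
  set f : Fin s → ℕ := fun lam => #{i | L i = lam}
  have hsum : ∑ lam, f lam = n := by simpa using sum_card_fiberwise_eq_card_filter univ univ L
  have hrate' : n * (s - d * t) + n * (d * t) = n * s := by
    rw [← mul_add, Nat.sub_add_cancel hst.le]
  have havg : ∀ S : Finset (Fin s), #S = d * t → s * ∑ lam ∈ S, f lam ≤ d * t * ∑ lam, f lam := by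
    intro S hS
    have hle := finrank_add_sum_card_fiber_le C L S fun c hc hc0 => hS ▸ hwt c hc hc0
    rw [hdim, Fintype.card_fin] at hle
    have := Nat.mul_le_mul_left s hle
    rw [hsum]
    linarith
  have hconst := apply_eq_apply_of_card_mul_sum_le (f := f) (Nat.mul_pos hd ht) (by simpa using hst)
    (by simpa using havg)
  let lam₀ : Fin s := ⟨0, by omega⟩
  have hn : n = s * f lam₀ := by
    rw [← hsum, sum_const_nat fun lam _ => hconst lam lam₀, card_univ, Fintype.card_fin]
  have hj : n / s = f lam₀ := by rw [hn, Nat.mul_div_cancel_left _ (by omega)]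
  refine ⟨⟨f lam₀, hn⟩, hj ▸ card_pos.2 ?_, ?_, fun lam => hj ▸ hconst lam lam₀⟩
  · obtain ⟨i, hi⟩ := hL lam₀
    exact ⟨i, by simp [hi]⟩
  · rw [hj]
    refine Nat.eq_of_mul_eq_mul_right (show 0 < s by omega) ?_
    rw [hrate, hn]
    ring

/-- Let s, d, t be positive integers with s > dt, F a field, C ⊆ F^n a
linear code of dimension ℓ with ℓ·s = n·(s − dt), and L : [n] → [s] a surjective
labeling such that every nonzero codeword has labelweight at least dt + 1.  Then s
divides n and, with j = n/s a positive integer, the code has dimension ℓ = j(s − dt)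
and every fiber of L has cardinality j. -/
theorem stmt_3 {F : Type*} [Field F] {n s d t ℓ : ℕ}
    (hs : 0 < s) (hd : 0 < d) (ht : 0 < t) (hst : d * t < s)
    (C : Submodule F (Fin n → F)) (hdim : Module.finrank F C = ℓ)
    (hrate : ℓ * s = n * (s - d * t))
    (L : Fin n → Fin s) (hL : Function.Surjective L)
    (hwt : ∀ c ∈ C, c ≠ 0 → d * t + 1 ≤ labelWeight L c) :
    s ∣ n ∧ 0 < n / s ∧ ℓ = (n / s) * (s - d * t) ∧
      ∀ lam : Fin s, (Finset.univ.filter fun i => L i = lam).card = n / s :=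
  stmt_3_general hd ht hst C hdim hrate L hL hwt
end

section
/- Let j, s, d, t be positive integers with s > dt, let F be a field, and let C ⊆ F^{js} be a linear code of length js and dimension j(s − dt). Let L : [js] → [s] be a surjective labeling such that every nonzero codeword of C has labelweight at least dt + 1, and let G ∈ F^{j(s−dt) × js} be any generator matrix for C. Then for every subset Λ ⊆ [s] with |Λ| = s − dt, the set of column indices {i ∈ [js] : L(i) ∈ Λ} has cardinality exactly j(s − dt), and the corresponding columns of G are linearly independent; equivalently, the square submatrix G(Λ) of G consisting of these columns is nonsingular. -/
open Finset

section Counting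

variable {ι α : Type*} [Fintype ι] [Fintype α] [DecidableEq α]

theorem card_powersetCard_filter_mem (k : ℕ) (hk : 0 < k) (a : α) :
    #{Λ ∈ powersetCard k (univ : Finset α) | a ∈ Λ} =
      (Fintype.card α - 1).choose (k - 1) := by
  simpa using card_filter_powersetCard_subset {a} univ k (subset_univ _) (by rwa [card_singleton])

theorem sum_powersetCard_card_filter_mem (L : ι → α) (k : ℕ) (hk : 0 < k) :
    ∑ Λ ∈ powersetCard k univ, #{i | L i ∈ Λ} =
      (Fintype.card α - 1).choose (k - 1) * Fintype.card ι := by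
  simp_rw [card_filter]
  rw [sum_comm]
  simp_rw [← card_filter, card_powersetCard_filter_mem k hk, sum_const, card_univ, smul_eq_mul,
    mul_comm]

theorem card_filter_mem_eq_of_le {L : ι → α} {j k : ℕ} (hk : 0 < k)
    (hι : Fintype.card ι = j * Fintype.card α)
    (hle : ∀ Λ : Finset α, #Λ = k → j * k ≤ #{i | L i ∈ Λ})
    {Λ : Finset α} (hΛ : #Λ = k) : #{i | L i ∈ Λ} = j * k := by
  set n := Fintype.card α
  have hn : 0 < n := hk.trans_le (hΛ ▸ card_le_univ Λ)
  have hchoose : (n - 1).choose (k - 1) * n = n.choose k * k := by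
    have := Nat.add_one_mul_choose_eq (n - 1) (k - 1)
    rw [Nat.sub_add_cancel hn, Nat.sub_add_cancel hk] at this
    rw [mul_comm, this]
  have hsum : ∑ Λ ∈ powersetCard k univ, #{i | L i ∈ Λ} =
      ∑ _Λ ∈ powersetCard k (univ : Finset α), j * k := by
    rw [sum_powersetCard_card_filter_mem L k hk, hι, sum_const, card_powersetCard, card_univ,
      smul_eq_mul]
    calc (n - 1).choose (k - 1) * (j * n) = j * ((n - 1).choose (k - 1) * n) := by ring
      _ = n.choose k * (j * k) := by rw [hchoose]; ring
  exact ((sum_eq_sum_iff_of_le fun Λ hΛ => hle Λ (mem_powersetCard.1 hΛ).2).1 hsum.symm Λ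
    (mem_powersetCard.2 ⟨subset_univ _, hΛ⟩)).symm

end Counting

theorem labelWeight_le_card_compl {ι F : Type*} [Fintype ι] [Zero F] {s : ℕ} {L : ι → Fin s}
    {c : ι → F} {Λ : Finset (Fin s)} (hc : ∀ i, L i ∈ Λ → c i = 0) :
    labelWeight L c ≤ #Λᶜ := by
  classical
  unfold labelWeight
  refine card_le_card fun a ha => ?_
  obtain ⟨i, hi, rfl⟩ := mem_image.1 ha
  exact mem_compl.2 fun hmem => (mem_filter.1 hi).2 (hc i hmem)

theorem disjoint_ker_funLeft_of_card_compl_lt_labelWeight {ι F : Type*} [Fintype ι] [Field F]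
    {s : ℕ} {L : ι → Fin s} {C : Submodule F (ι → F)} {Λ : Finset (Fin s)}
    (hwt : ∀ c ∈ C, c ≠ 0 → #Λᶜ < labelWeight L c) :
    Disjoint C
      (LinearMap.ker (LinearMap.funLeft F F (Subtype.val : {i // L i ∈ Λ} → ι))) := by
  refine Submodule.disjoint_def.2 fun c hcC hker => ?_
  by_contra hc
  refine (hwt c hcC hc).not_ge (labelWeight_le_card_compl fun i hi => ?_)
  exact congrFun (LinearMap.mem_ker.1 hker) ⟨i, hi⟩

theorem Matrix.linearIndependent_col_of_row {m n K : Type*} [Fintype m] [Fintype n] [Field K]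
    {M : Matrix m n K} (h : LinearIndependent K M.row)
    (hcard : Fintype.card n ≤ Fintype.card m) : LinearIndependent K M.col := by
  rw [linearIndependent_iff_card_eq_finrank_span, Set.finrank, ← rank_eq_finrank_span_cols,
    h.rank_matrix]
  refine le_antisymm hcard ?_
  simpa using h.fintype_card_le_finrank

theorem stmt_4_general {F : Type*} [Field F] {j s d t : ℕ}
    (hst : d * t < s)
    (C : Submodule F (Fin (j * s) → F))
    (hdim : Module.finrank F C = j * (s - d * t))
    (L : Fin (j * s) → Fin s)
    (hwt : ∀ c ∈ C, c ≠ 0 → d * t + 1 ≤ labelWeight L c)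
    (G : Matrix (Fin (j * (s - d * t))) (Fin (j * s)) F)
    (hG : Submodule.span F (Set.range fun i => G i) = C) :
    ∀ Λ : Finset (Fin s), Λ.card = s - d * t →
      (Finset.univ.filter fun i : Fin (j * s) => L i ∈ Λ).card = j * (s - d * t) ∧
      LinearIndependent F
        (fun i : {x : Fin (j * s) // L x ∈ Λ} => fun r => G r i.1) := by
  have hrows : LinearIndependent F G.row := by
    rw [linearIndependent_iff_card_eq_finrank_span, Set.finrank, Matrix.row, hG, hdim,
      Fintype.card_fin]
  have hrestrict : ∀ Λ : Finset (Fin s), #Λ = s - d * t →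
      LinearIndependent F (G.submatrix id (Subtype.val : {i // L i ∈ Λ} → _)).row := by
    intro Λ hΛ
    have hdisj := disjoint_ker_funLeft_of_card_compl_lt_labelWeight (L := L) (C := C) (Λ := Λ)
      fun c hc hc0 => by
        have := hwt c hc hc0
        rw [card_compl, hΛ, Fintype.card_fin]
        omega
    rw [← hG] at hdisj
    exact hrows.map hdisj
  have hcard : ∀ Λ : Finset (Fin s), #Λ = s - d * t →
      #{i | L i ∈ Λ} = j * (s - d * t) := by
    refine fun Λ => card_filter_mem_eq_of_le (by omega) (by simp) fun Λ hΛ => ?_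
    simpa [Fintype.card_subtype] using (hrestrict Λ hΛ).fintype_card_le_finrank
  intro Λ hΛ
  refine ⟨hcard Λ hΛ, Matrix.linearIndependent_col_of_row (hrestrict Λ hΛ) ?_⟩
  simp [Fintype.card_subtype, hcard Λ hΛ]

/-- Let j, s, d, t be positive integers with s > dt, C ⊆ F^{js} a linear
code of dimension j(s − dt), L : [js] → [s] a surjective labeling such that every
nonzero codeword has labelweight at least dt + 1, and G a generator matrix of C.
Then for every Λ ⊆ [s] with |Λ| = s − dt, the set of column indices with label in Λ
has cardinality j(s − dt) and the corresponding columns of G are linearly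
independent. -/
theorem stmt_4 {F : Type*} [Field F] {j s d t : ℕ}
    (hj : 0 < j) (hs : 0 < s) (hd : 0 < d) (ht : 0 < t) (hst : d * t < s)
    (C : Submodule F (Fin (j * s) → F))
    (hdim : Module.finrank F C = j * (s - d * t))
    (L : Fin (j * s) → Fin s) (hL : Function.Surjective L)
    (hwt : ∀ c ∈ C, c ≠ 0 → d * t + 1 ≤ labelWeight L c)
    (G : Matrix (Fin (j * (s - d * t))) (Fin (j * s)) F)
    (hG : Submodule.span F (Set.range fun i => G i) = C) :
    ∀ Λ : Finset (Fin s), Λ.card = s - d * t →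
      (Finset.univ.filter fun i : Fin (j * s) => L i ∈ Λ).card = j * (s - d * t) ∧
      LinearIndependent F
        (fun i : {x : Fin (j * s) // L x ∈ Λ} => fun r => G r i.1) :=
  stmt_4_general hst C hdim L hwt G hG
end

section
/- Let j, s, d, t be positive integers with s > dt and let F be a finite field with q elements. Suppose there exists a linear code C ⊆ F^{js} of length js and dimension j(s − dt), together with a surjective labeling L : [js] → [s] such that every nonzero codeword of C has labelweight at least dt + 1. Then there exists a block totally nonsingular matrix consisting of an (s − dt) × dt array of invertible j × j blocks over F. -/
/-- A block matrix (an r × u array of j × j blocks) is block totally nonsingular if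
every square sub-array of blocks is nonsingular. -/
def IsBlockTotallyNonsingular {F : Type*} [Field F] {r u j : ℕ}
    (A : Matrix (Fin r × Fin j) (Fin u × Fin j) F) : Prop :=
  ∀ (k : ℕ), 1 ≤ k → ∀ (ρ : Fin k → Fin r) (σ : Fin k → Fin u),
    Function.Injective ρ → Function.Injective σ →
      (Matrix.of fun p q : Fin k × Fin j => A (ρ p.1, p.2) (σ q.1, q.2)).det ≠ 0


/-!
Write `r = dt`. A code of dimension `j(s - r)` in which every nonzero codeword meets at least
`r + 1` labels behaves like an MDS code over the alphabet `F^j`. Restricting to the coordinates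
outside any `r` labels is injective, so every `r` labels carry at most `jr` coordinates; since
all `s` labels carry `js` coordinates, every label carries exactly `j`. Choosing `s - r` information
labels, the code becomes the graph `w ↦ (w, wA)` of a block matrix `A`. If some square block
minor of `A` had a nonzero left kernel vector `v`, the codeword with information part `v`
(spread over the chosen `k` row blocks) would vanish on the chosen `k` parity blocks, so it would
meet at most `k + (r - k) = r` labels.
-/

open Finset Module Function Matrix

theorem Finset.le_of_notMem_of_mem_of_forall_sum_le {α M : Type*} [DecidableEq α]
    [AddCommMonoid M] [LinearOrder M] [IsOrderedCancelAddMonoid M] (n : α → M) {S : Finset α}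
    (hmax : ∀ T : Finset α, #T = #S → ∑ ℓ ∈ T, n ℓ ≤ ∑ ℓ ∈ S, n ℓ) {a b : α}
    (ha : a ∉ S) (hb : b ∈ S) : n a ≤ n b := by
  have ha' : a ∉ S.erase b := fun h => ha (mem_of_mem_erase h)
  have h := hmax (insert a (S.erase b)) (by rw [card_insert_of_notMem ha', card_erase_add_one hb])
  rw [sum_insert ha', ← add_sum_erase S n hb] at h
  exact le_of_add_le_add_right h

theorem eq_of_forall_card_eq_sum_le {α : Type*} [Fintype α] [DecidableEq α] (n : α → ℕ)
    {r j : ℕ} (hr : 0 < r) (hrα : r < Fintype.card α)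
    (htot : ∑ ℓ, n ℓ = j * Fintype.card α)
    (hle : ∀ Λ : Finset α, #Λ = r → ∑ ℓ ∈ Λ, n ℓ ≤ j * r) (ℓ : α) : n ℓ = j := by
  obtain ⟨S, hSmem, hSmax⟩ := exists_max_image (powersetCard r univ) (fun T => ∑ ℓ ∈ T, n ℓ)
    (powersetCard_nonempty.mpr (by simpa using hrα.le))
  have hS : #S = r := (mem_powersetCard.mp hSmem).2
  have hexch : ∀ a ∉ S, ∀ b ∈ S, n a ≤ n b := fun a ha b hb =>
    le_of_notMem_of_mem_of_forall_sum_le n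
      (fun T hT => hSmax T (mem_powersetCard.mpr ⟨subset_univ T, hT.trans hS⟩)) ha hb
  have hSc : #Sᶜ = Fintype.card α - r := by rw [card_compl, hS]
  have hsumS : ∑ ℓ ∈ S, n ℓ ≤ ∑ _ℓ ∈ S, j := by
    rw [sum_const, hS, smul_eq_mul, mul_comm]
    exact hle S hS
  have hsumSc : ∑ _ℓ ∈ Sᶜ, j ≤ ∑ ℓ ∈ Sᶜ, n ℓ := by
    have hsplit := sum_add_sum_compl S n
    rw [sum_const, hSc, smul_eq_mul, mul_comm, Nat.mul_sub]
    rw [sum_const, hS, smul_eq_mul, mul_comm] at hsumS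
    omega
  obtain ⟨a, haSc, ha⟩ := exists_le_of_sum_le (card_pos.mp (by omega)) hsumSc
  have hSge : ∀ b ∈ S, j ≤ n b := fun b hb => ha.trans (hexch a (mem_compl.mp haSc) b hb)
  have hSeq : ∀ b ∈ S, j = n b :=
    (sum_eq_sum_iff_of_le hSge).mp (le_antisymm (sum_le_sum hSge) hsumS)
  obtain ⟨b, hb⟩ : S.Nonempty := card_pos.mp (hS ▸ hr)
  have hScle : ∀ a ∈ Sᶜ, n a ≤ j := fun a ha => hSeq b hb ▸ hexch a (mem_compl.mp ha) b hb
  have hSceq := (sum_eq_sum_iff_of_le hScle).mp (le_antisymm (sum_le_sum hScle) hsumSc)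
  by_cases h : ℓ ∈ S
  · exact (hSeq ℓ h).symm
  · exact hSceq ℓ (mem_compl.mpr h)

section LabelWeight

variable {F ι : Type*} [Fintype ι] {s : ℕ}

theorem labelWeight_le_card [Zero F] (L : ι → Fin s) {c : ι → F} {Λ : Finset (Fin s)}
    (h : ∀ i, c i ≠ 0 → L i ∈ Λ) : labelWeight L c ≤ #Λ := by
  classical
  refine card_le_card fun ℓ hℓ => ?_
  obtain ⟨i, hi, rfl⟩ := mem_image.mp hℓ
  exact h i (mem_filter.mp hi).2

variable [Semiring F] {C : Submodule F (ι → F)} {L : ι → Fin s} {r : ℕ}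

theorem eq_zero_of_forall_label_notMem (hwt : ∀ c ∈ C, c ≠ 0 → r + 1 ≤ labelWeight L c)
    {Λ : Finset (Fin s)} (hΛ : #Λ ≤ r) {c : ι → F} (hc : c ∈ C)
    (hvan : ∀ i, L i ∉ Λ → c i = 0) : c = 0 := by
  by_contra hne
  have hle := labelWeight_le_card L fun i hi => by_contra fun h => hi (hvan i h)
  have hge := hwt c hc hne
  omega

theorem eq_zero_of_forall_block_notMem {κ β : Type*} (lab : κ → Fin s) {φ : κ × β → ι}
    (hφ : Surjective φ) (hL : ∀ u b, L (φ (u, b)) = lab u)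
    (hwt : ∀ c ∈ C, c ≠ 0 → r + 1 ≤ labelWeight L c) {U : Finset κ} (hU : #U ≤ r)
    {c : ι → F} (hc : c ∈ C) (hvan : ∀ u ∉ U, ∀ b, c (φ (u, b)) = 0) : c = 0 := by
  classical
  refine eq_zero_of_forall_label_notMem (Λ := U.image lab) hwt (card_image_le.trans hU) hc
    fun i hi => ?_
  obtain ⟨⟨u, b⟩, rfl⟩ := hφ i
  exact hvan u (fun hu => hi (hL u b ▸ mem_image_of_mem lab hu)) b

end LabelWeight

section Systematic

variable {F ι : Type*} [Field F]

theorem Submodule.injective_funLeft_comp_subtype {X : Type*} (C : Submodule F (ι → F))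
    (f : X → ι) (h : ∀ c ∈ C, (∀ x, c (f x) = 0) → c = 0) :
    Injective ((LinearMap.funLeft F F f).comp C.subtype) := by
  rw [← LinearMap.ker_eq_bot, LinearMap.ker_eq_bot']
  exact fun c hc => Subtype.ext (h c c.2 (congrFun hc))

theorem Submodule.finrank_le_card_of_forall_eq_zero {X : Type*} [Fintype X]
    (C : Submodule F (ι → F)) (f : X → ι) (h : ∀ c ∈ C, (∀ x, c (f x) = 0) → c = 0) :
    finrank F C ≤ Fintype.card X := by
  simpa using LinearMap.finrank_le_finrank_of_injective (C.injective_funLeft_comp_subtype f h)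

theorem Submodule.exists_matrix_forall_exists_mem {X Y : Type*} [Fintype X] [DecidableEq X]
    [Fintype Y] (C : Submodule F (ι → F)) (f : X → ι) (g : Y → ι)
    (h : ∀ c ∈ C, (∀ x, c (f x) = 0) → c = 0) (hdim : finrank F C = Fintype.card X) :
    ∃ A : Matrix X Y F, ∀ w : X → F, ∃ c ∈ C, (∀ x, c (f x) = w x) ∧ ∀ y, c (g y) = (w ᵥ* A) y := by
  have hinj := C.injective_funLeft_comp_subtype f h
  have : FiniteDimensional F C := FiniteDimensional.of_injective _ hinj
  let E := LinearMap.linearEquivOfInjective _ hinj (by rw [hdim, finrank_fintype_fun_eq_card])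
  let ψ : (X → F) →ₗ[F] Y → F :=
    (LinearMap.funLeft F F g).comp (C.subtype.comp E.symm.toLinearMap)
  refine ⟨(LinearMap.toMatrix' ψ)ᵀ, fun w => ⟨E.symm w, (E.symm w).2, fun x => ?_, fun y => ?_⟩⟩
  · exact congrFun (E.apply_symm_apply w) x
  · rw [vecMul_transpose, LinearMap.toMatrix'_mulVec]
    rfl

end Systematic

theorem card_fiber_eq_of_labelWeight {F ι : Type*} [Field F] [Fintype ι] {s r j : ℕ}
    (hr : 0 < r) (hrs : r < s) (hι : Fintype.card ι = j * s) {C : Submodule F (ι → F)}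
    (hdim : finrank F C = j * (s - r)) {L : ι → Fin s}
    (hwt : ∀ c ∈ C, c ≠ 0 → r + 1 ≤ labelWeight L c) (ℓ : Fin s) :
    Fintype.card {i // L i = ℓ} = j := by
  classical
  rw [Fintype.card_subtype]
  refine eq_of_forall_card_eq_sum_le (fun ℓ => #{i | L i = ℓ}) hr (by simpa using hrs) ?_ ?_ ℓ
  · simp [sum_card_fiberwise_eq_card_filter, hι]
  · intro Λ hΛ
    have hout := C.finrank_le_card_of_forall_eq_zero (Subtype.val : {i // L i ∉ Λ} → ι)
      fun c hc hvan => eq_zero_of_forall_label_notMem hwt hΛ.le hc fun i hi => hvan ⟨i, hi⟩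
    have hsplit := card_filter_add_card_filter_not (s := univ) (fun i => L i ∈ Λ)
    rw [Fintype.card_subtype, hdim, Nat.mul_sub] at hout
    rw [card_univ, hι] at hsplit
    rw [sum_card_fiberwise_eq_card_filter]
    omega

theorem exists_equiv_prod_fin_of_card_fiber {ι κ : Type*} [Fintype ι] [DecidableEq κ]
    (L : ι → κ) {j : ℕ} (h : ∀ ℓ, Fintype.card {i // L i = ℓ} = j) :
    ∃ e : κ × Fin j ≃ ι, ∀ u b, L (e (u, b)) = u :=
  ⟨((Equiv.sigmaEquivProd κ (Fin j)).symm.trans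
      (Equiv.sigmaCongrRight fun ℓ => (Fintype.equivFinOfCardEq (h ℓ)).symm)).trans
      (Equiv.sigmaFiberEquiv L),
    fun u b => ((Fintype.equivFinOfCardEq (h u)).symm b).2⟩

theorem Matrix.extend_vecMul {α β γ R : Type*} [Fintype α] [Fintype β]
    [NonUnitalNonAssocSemiring R] {f : α → β} (hf : Injective f) (v : α → R)
    (A : Matrix β γ R) : extend f v 0 ᵥ* A = v ᵥ* A.submatrix f id := by
  ext y
  refine (Fintype.sum_of_injective f hf _ _ (fun b hb => ?_) fun a => ?_).symm
  · rw [extend_apply' _ _ _ fun ⟨a, ha⟩ => hb ⟨a, ha⟩, Pi.zero_apply, zero_mul]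
  · rw [hf.extend_apply]
    rfl

section BlockTotallyNonsingular

variable {F ι : Type*} [Field F] [Fintype ι] {m r j s : ℕ} {C : Submodule F (ι → F)}
  {L : ι → Fin s} (lab : Fin m ⊕ Fin r → Fin s) {φ : (Fin m ⊕ Fin r) × Fin j → ι}

theorem isBlockTotallyNonsingular_of_forall_exists_mem (hφ : Surjective φ)
    (hL : ∀ u b, L (φ (u, b)) = lab u) (hwt : ∀ c ∈ C, c ≠ 0 → r + 1 ≤ labelWeight L c)
    {A : Matrix (Fin m × Fin j) (Fin r × Fin j) F}
    (hA : ∀ w, ∃ c ∈ C, (∀ x, c (φ (.inl x.1, x.2)) = w x) ∧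
      ∀ y, c (φ (.inr y.1, y.2)) = (w ᵥ* A) y) :
    IsBlockTotallyNonsingular A := by
  classical
  intro k _ ρ σ hρ hσ hdet
  obtain ⟨v, hv0, hvM⟩ := exists_vecMul_eq_zero_iff.mpr hdet
  have hρ' : Injective (Prod.map ρ id : Fin k × Fin j → Fin m × Fin j) := hρ.prodMap injective_id
  obtain ⟨c, hc, hinfo, hpar⟩ := hA (extend (Prod.map ρ id) v 0)
  have hparσ : ∀ p b, c (φ (.inr (σ p), b)) = 0 := fun p b => by
    rw [hpar (σ p, b), extend_vecMul hρ']
    exact congrFun hvM (p, b)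
  -- `c` can only meet the information labels in the range of `ρ` and the parity labels
  -- outside the range of `σ`.
  let U := (univ.image ρ).disjSum (univ.image σ)ᶜ
  have hU : #U ≤ r := by
    have hρk := card_image_le (s := univ) (f := ρ)
    have hσk := card_image_of_injective univ hσ
    have hσr := card_le_univ (univ.image σ)
    rw [card_disjSum, card_compl]
    simp only [card_univ, Fintype.card_fin] at *
    omega
  have hvan : ∀ u ∉ U, ∀ b, c (φ (u, b)) = 0 := by
    rintro (a | q) hu b
    · rw [hinfo (a, b)]
      exact extend_apply' _ _ _ fun ⟨z, hz⟩ =>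
        hu (inl_mem_disjSum.mpr (mem_image.mpr ⟨z.1, mem_univ _, congrArg Prod.fst hz⟩))
    · obtain ⟨p, rfl⟩ : ∃ p, σ p = q := by simpa [U] using hu
      exact hparσ p b
  have hc0 := eq_zero_of_forall_block_notMem lab hφ hL hwt hU hc hvan
  refine hv0 (funext fun z => ?_)
  rw [← hρ'.extend_apply v 0 z, ← hinfo, hc0]
  rfl

theorem exists_isBlockTotallyNonsingular_of_labelWeight (hφ : Surjective φ)
    (hL : ∀ u b, L (φ (u, b)) = lab u) (hdim : finrank F C = m * j)
    (hwt : ∀ c ∈ C, c ≠ 0 → r + 1 ≤ labelWeight L c) :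
    ∃ A : Matrix (Fin m × Fin j) (Fin r × Fin j) F, IsBlockTotallyNonsingular A := by
  have hinfo : ∀ c ∈ C, (∀ x : Fin m × Fin j, c (φ (.inl x.1, x.2)) = 0) → c = 0 :=
    fun c hc hvan => eq_zero_of_forall_block_notMem lab hφ hL hwt (U := univ.map .inr)
      (by simp) hc (by rintro (a | q) hu b; exacts [hvan (a, b), absurd (by simp) hu])
  obtain ⟨A, hA⟩ := C.exists_matrix_forall_exists_mem _
    (fun y : Fin r × Fin j => φ (.inr y.1, y.2)) hinfo (by simp [hdim])
  exact ⟨A, isBlockTotallyNonsingular_of_forall_exists_mem lab hφ hL hwt hA⟩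

end BlockTotallyNonsingular

theorem stmt_5_general {F : Type*} [Field F] {j s d t : ℕ}
    (hd : 0 < d) (ht : 0 < t) (hst : d * t < s)
    (C : Submodule F (Fin (j * s) → F))
    (hdim : Module.finrank F C = j * (s - d * t))
    (L : Fin (j * s) → Fin s)
    (hwt : ∀ c ∈ C, c ≠ 0 → d * t + 1 ≤ labelWeight L c) :
    ∃ A : Matrix (Fin (s - d * t) × Fin j) (Fin (d * t) × Fin j) F,
      IsBlockTotallyNonsingular A := by
  obtain ⟨e, he⟩ := exists_equiv_prod_fin_of_card_fiber L
    (card_fiber_eq_of_labelWeight (Nat.mul_pos hd ht) hst (Fintype.card_fin _) hdim hwt)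
  let g : Fin (s - d * t) ⊕ Fin (d * t) ≃ Fin s := finSumFinEquiv.trans (finCongr (by omega))
  exact exists_isBlockTotallyNonsingular_of_labelWeight g
    (e.surjective.comp (g.surjective.prodMap surjective_id)) (fun u b => he (g u) b)
    (by rw [hdim, mul_comm]) hwt

/-- If there is a linear code C ⊆ F^{js} of dimension j(s − dt) with a
surjective labeling L : [js] → [s] under which every nonzero codeword has labelweight
at least dt + 1, then there exists a block totally nonsingular (s − dt) × dt array of
invertible j × j blocks over F. -/
theorem stmt_5 {F : Type*} [Field F] [Fintype F] {q j s d t : ℕ}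
    (hq : Fintype.card F = q)
    (hj : 0 < j) (hs : 0 < s) (hd : 0 < d) (ht : 0 < t) (hst : d * t < s)
    (C : Submodule F (Fin (j * s) → F))
    (hdim : Module.finrank F C = j * (s - d * t))
    (L : Fin (j * s) → Fin s) (hL : Function.Surjective L)
    (hwt : ∀ c ∈ C, c ≠ 0 → d * t + 1 ≤ labelWeight L c) :
    ∃ A : Matrix (Fin (s - d * t) × Fin j) (Fin (d * t) × Fin j) F,
      IsBlockTotallyNonsingular A :=
  stmt_5_general hd ht hst C hdim L hwt
end

section
/- Let j, s, d, t be positive integers with s > dt and let F be a field. Let A be a block totally nonsingular matrix consisting of an (s − dt) × dt array of invertible j × j blocks over F. Let G = [I | A] ∈ F^{j(s−dt) × js}, where I is the j(s−dt) × j(s−dt) identity matrix, let C ⊆ F^{js} be the row space of G, and define the labeling L : [js] → [s] that assigns label i to the i-th block of j consecutive coordinates (L(x) = ⌈x/j⌉). Then C is a linear code of dimension j(s − dt) and every nonzero codeword of C has labelweight at least dt + 1 with respect to L. -/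
open Finset Matrix

open Classical in
noncomputable def blockSupport {ι κ F : Type*} [Fintype ι] [Fintype κ] [Zero F]
    (x : ι × κ → F) : Finset ι :=
  (univ.filter fun p => x p ≠ 0).image Prod.fst

theorem mem_blockSupport {ι κ F : Type*} [Fintype ι] [Fintype κ] [Zero F]
    {x : ι × κ → F} {i : ι} : i ∈ blockSupport x ↔ ∃ a, x (i, a) ≠ 0 := by
  simp [blockSupport]

theorem vecMul_submatrix_of_support_subset {ι ι' κ κ' R : Type*} [Fintype ι] [Fintype ι']
    [NonUnitalNonAssocSemiring R] (M : Matrix ι κ R) {e : ι' → ι} (he : Function.Injective e)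
    (g : κ' → κ) {x : ι → R} (hx : ∀ i, x i ≠ 0 → i ∈ Set.range e) :
    (x ∘ e) ᵥ* M.submatrix e g = (x ᵥ* M) ∘ g := by
  ext q
  refine sum_of_injOn e he.injOn (fun _ _ => mem_coe.mpr (mem_univ _)) (fun i _ hi => ?_)
    fun _ _ => rfl
  have : x i = 0 := by
    by_contra h
    obtain ⟨i', rfl⟩ := hx i h
    exact hi ⟨i', by simp, rfl⟩
  simp [this]

namespace IsBlockTotallyNonsingular

variable {F : Type*} [Field F] {r u j : ℕ} {A : Matrix (Fin r × Fin j) (Fin u × Fin j) F}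

theorem eq_zero_of_vecMul_eq_zero (hA : IsBlockTotallyNonsingular A) {k : ℕ} (hk : 1 ≤ k)
    {ρ : Fin k → Fin r} {σ : Fin k → Fin u} (hρ : Function.Injective ρ)
    (hσ : Function.Injective σ) {x : Fin r × Fin j → F}
    (hx : ∀ p, x p ≠ 0 → p.1 ∈ Set.range ρ) (hxA : ∀ q b, (x ᵥ* A) (σ q, b) = 0) :
    x = 0 := by
  have he : Function.Injective (Prod.map ρ id : Fin k × Fin j → Fin r × Fin j) :=
    hρ.prodMap Function.injective_id
  have hy : (x ∘ Prod.map ρ id) ᵥ* A.submatrix (Prod.map ρ id) (Prod.map σ id) = 0 := by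
    rw [vecMul_submatrix_of_support_subset A he _ fun p hp => ?_]
    · ext q
      exact hxA q.1 q.2
    · obtain ⟨i, hi⟩ := hx p hp
      exact ⟨(i, p.2), Prod.ext hi rfl⟩
  by_contra hx0
  refine hA k hk ρ σ hρ hσ (exists_vecMul_eq_zero_iff.mp ⟨_, fun h => hx0 ?_, hy⟩)
  ext p
  by_contra hp
  obtain ⟨i, hi⟩ := hx p hp
  exact hp (by simpa [hi] using congrFun h (i, p.2))

theorem add_card_blockSupport_vecMul (hA : IsBlockTotallyNonsingular A)
    {x : Fin r × Fin j → F} (hx : x ≠ 0) :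
    u + 1 ≤ #(blockSupport x) + #(blockSupport (x ᵥ* A)) := by
  by_contra! h
  set S := blockSupport x
  have hS : 1 ≤ #S := by
    obtain ⟨p, hp⟩ := Function.ne_iff.mp hx
    exact card_pos.mpr ⟨p.1, mem_blockSupport.mpr ⟨p.2, hp⟩⟩
  obtain ⟨Z, hZ, hZS⟩ := exists_subset_card_eq (s := (blockSupport (x ᵥ* A))ᶜ)
    (n := #S) (by rw [card_compl, Fintype.card_fin]; omega)
  refine hx (hA.eq_zero_of_vecMul_eq_zero hS (S.orderEmbOfFin rfl).injective
    (Z.orderEmbOfFin hZS).injective (fun p hp => ?_) fun q b => ?_)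
  · rw [range_orderEmbOfFin]
    exact mem_blockSupport.mpr ⟨p.2, hp⟩
  · have hq := hZ (Z.orderEmbOfFin_mem hZS q)
    rw [mem_compl, mem_blockSupport, not_exists] at hq
    exact not_not.mp (hq b)

end IsBlockTotallyNonsingular

theorem card_blockSupport_add_le_labelWeight {α β γ δ F : Type*} [Fintype α] [Fintype β]
    [Fintype γ] [Fintype δ] [Zero F] {s : ℕ} {L : (α × β) ⊕ (γ × δ) → Fin s}
    {f : α → Fin s} {g : γ → Fin s} (hf : Function.Injective f) (hg : Function.Injective g)
    (hfg : ∀ a b, f a ≠ g b) (hLl : ∀ p, L (Sum.inl p) = f p.1)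
    (hLr : ∀ p, L (Sum.inr p) = g p.1) (c : (α × β) ⊕ (γ × δ) → F) :
    #(blockSupport (c ∘ Sum.inl)) + #(blockSupport (c ∘ Sum.inr)) ≤ labelWeight L c := by
  classical
  rw [← card_image_of_injective _ hf, ← card_image_of_injective _ hg,
    ← card_union_of_disjoint (disjoint_left.mpr ?_)]
  · refine card_le_card (union_subset ?_ ?_) <;> intro l hl <;>
      obtain ⟨i, hi, rfl⟩ := mem_image.mp hl <;> obtain ⟨a, ha⟩ := mem_blockSupport.mp hi
    · exact mem_image.mpr ⟨Sum.inl (i, a), by simpa using ha, hLl _⟩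
    · exact mem_image.mpr ⟨Sum.inr (i, a), by simpa using ha, hLr _⟩
  · simp only [mem_image]
    rintro _ ⟨a, -, rfl⟩ ⟨b, -, hb⟩
    exact hfg a b hb.symm

theorem finrank_range_vecMulLinear_fromCols_one {m n F : Type*} [Field F] [Fintype m]
    [DecidableEq m] (A : Matrix m n F) :
    Module.finrank F (LinearMap.range (fromCols (1 : Matrix m m F) A).vecMulLinear) =
      Fintype.card m := by
  rw [LinearMap.finrank_range_of_inj, Module.finrank_fintype_fun_eq_card]
  intro x y h
  simpa using congrArg (· ∘ Sum.inl) h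

/-- Let A be a block totally nonsingular (s − dt) × dt array of j × j
blocks over F, let G = [I | A], let C be the row space of G, and let L be the labeling
assigning label i to the i-th block of j consecutive coordinates.  Then C is a linear
code of dimension j(s − dt) and every nonzero codeword of C has labelweight at least
dt + 1 with respect to L. -/
theorem stmt_6 {F : Type*} [Field F] {j s d t : ℕ}
    (hst : d * t < s)
    (A : Matrix (Fin (s - d * t) × Fin j) (Fin (d * t) × Fin j) F)
    (hA : IsBlockTotallyNonsingular A)
    (G : Matrix (Fin (s - d * t) × Fin j)
        ((Fin (s - d * t) × Fin j) ⊕ (Fin (d * t) × Fin j)) F)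
    (hG : G = Matrix.fromCols 1 A)
    (C : Submodule F (((Fin (s - d * t) × Fin j) ⊕ (Fin (d * t) × Fin j)) → F))
    (hC : C = Submodule.span F (Set.range fun i => G i))
    (L : ((Fin (s - d * t) × Fin j) ⊕ (Fin (d * t) × Fin j)) → Fin s)
    (hLleft : ∀ p : Fin (s - d * t) × Fin j,
      L (Sum.inl p) = Fin.castLE (Nat.sub_le s (d * t)) p.1)
    (hLright : ∀ p : Fin (d * t) × Fin j,
      L (Sum.inr p) = ⟨s - d * t + (p.1 : ℕ), by have := p.1.isLt; omega⟩) :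
    Module.finrank F C = j * (s - d * t) ∧
      ∀ c ∈ C, c ≠ 0 → d * t + 1 ≤ labelWeight L c := by
  subst hG
  obtain rfl : C = LinearMap.range (fromCols 1 A).vecMulLinear :=
    hC.trans (range_vecMulLinear _).symm
  refine ⟨by rw [finrank_range_vecMulLinear_fromCols_one]; simp [mul_comm], ?_⟩
  rintro _ ⟨x, rfl⟩ hc
  have hx : x ≠ 0 := by rintro rfl; simp at hc
  have hshift : Function.Injective fun q : Fin (d * t) =>
      (⟨s - d * t + (q : ℕ), by have := q.isLt; omega⟩ : Fin s) := fun a b h => by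
    simp only [Fin.mk.injEq, Nat.add_left_cancel_iff] at h
    exact Fin.ext h
  calc d * t + 1 ≤ #(blockSupport x) + #(blockSupport (x ᵥ* A)) :=
        hA.add_card_blockSupport_vecMul hx
    _ = #(blockSupport ((x ᵥ* fromCols 1 A) ∘ Sum.inl)) +
          #(blockSupport ((x ᵥ* fromCols 1 A) ∘ Sum.inr)) := by
      simp only [vecMul_fromCols, Sum.elim_comp_inl, Sum.elim_comp_inr, vecMul_one]
    _ ≤ labelWeight L (x ᵥ* fromCols 1 A) :=
        card_blockSupport_add_le_labelWeight (Fin.castLE_injective _) hshift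
          (fun a b h => by have := congrArg Fin.val h; simp only [Fin.val_castLE] at this; omega)
          hLleft hLright _
end

section
/- Let r, u be integers with min{r, u} > 1, let F be a finite field with q elements, and let j ≥ 1 be an integer. If there exists a block totally nonsingular matrix consisting of an r × u array of invertible j × j blocks over F, then q^j ≥ r + 1 and q^j ≥ u + 1. -/
open Matrix

private lemma inj2' {n : ℕ} {a b : Fin n} (h : a ≠ b) :
    Function.Injective ![a, b] := by
  intro x y hxy
  fin_cases x <;> fin_cases y <;> simp_all

private def sumProdEquiv (j : ℕ) : (Fin j ⊕ Fin j) ≃ (Fin 2 × Fin j) where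
  toFun x := Sum.elim (fun a => ((0 : Fin 2), a)) (fun a => ((1 : Fin 2), a)) x
  invFun p := if p.1 = 0 then Sum.inl p.2 else Sum.inr p.2
  left_inv := by rintro (a | a) <;> simp
  right_inv := by rintro ⟨i, a⟩; fin_cases i <;> simp

private def oneProdEquiv (j : ℕ) : (Fin 1 × Fin j) ≃ Fin j where
  toFun p := p.2
  invFun a := (0, a)
  left_inv := by rintro ⟨i, a⟩; fin_cases i; rfl
  right_inv := fun a => rfl

private lemma diff_det_ne_zero {F : Type*} [Field F] {j : ℕ}
    {P Q R S : Matrix (Fin j) (Fin j) F}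
    (hP : IsUnit P.det) (hR : IsUnit R.det)
    (h : (fromBlocks P Q R S).det ≠ 0) :
    (R⁻¹ * S - P⁻¹ * Q).det ≠ 0 := by
  have hPinv : Invertible P := P.invertibleOfIsUnitDet hP
  rw [det_fromBlocks₁₁] at h
  have h2 : (S - R * ⅟P * Q).det ≠ 0 := fun h0 => h (by rw [h0, mul_zero])
  have key : S - R * ⅟P * Q = R * (R⁻¹ * S - P⁻¹ * Q) := by
    rw [Matrix.mul_sub, ← Matrix.mul_assoc, Matrix.mul_nonsing_inv _ hR, Matrix.one_mul,
      Matrix.invOf_eq_nonsing_inv, Matrix.mul_assoc]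
  rw [key, det_mul] at h2
  exact fun h0 => h2 (by rw [h0, mul_zero])

private lemma row_bound {F : Type*} [Field F] [Fintype F] {q r u j : ℕ}
    (hq : Fintype.card F = q) (hu : 1 < u) (hj : 1 ≤ j)
    (A : Matrix (Fin r × Fin j) (Fin u × Fin j) F)
    (hA : IsBlockTotallyNonsingular A) : r + 1 ≤ q ^ j := by
  classical
  set c0 : Fin u := ⟨0, by omega⟩ with hc0
  set c1 : Fin u := ⟨1, hu⟩ with hc1
  have hc01 : c0 ≠ c1 := by simp [hc0, hc1, Fin.ext_iff]
  -- the blocks in columns c0 and c1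
  set X : Fin r → Matrix (Fin j) (Fin j) F :=
    fun i => Matrix.of fun a b => A (i, a) (c0, b) with hX
  set Y : Fin r → Matrix (Fin j) (Fin j) F :=
    fun i => Matrix.of fun a b => A (i, a) (c1, b) with hY
  -- single blocks are invertible
  have hblock : ∀ (i : Fin r) (c : Fin u),
      (Matrix.of fun a b => A (i, a) (c, b) : Matrix (Fin j) (Fin j) F).det ≠ 0 := by
    intro i c
    have h1 := hA 1 le_rfl (fun _ => i) (fun _ => c)
      (Function.injective_of_subsingleton _) (Function.injective_of_subsingleton _)
    have heq : (Matrix.of fun a b => A (i, a) (c, b) : Matrix (Fin j) (Fin j) F) =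
        (Matrix.of fun p q : Fin 1 × Fin j =>
          A ((fun _ => i) p.1, p.2) ((fun _ => c) q.1, q.2)).submatrix
            (oneProdEquiv j).symm (oneProdEquiv j).symm := by
      ext a b; rfl
    rw [heq, Matrix.det_submatrix_equiv_self]
    exact h1
  have hXdet : ∀ i, (X i).det ≠ 0 := fun i => hblock i c0
  have hYdet : ∀ i, (Y i).det ≠ 0 := fun i => hblock i c1
  -- pairwise condition
  set B : Fin r → Matrix (Fin j) (Fin j) F := fun i => (X i)⁻¹ * (Y i) with hB
  have hBdet : ∀ i, (B i).det ≠ 0 := by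
    intro i
    rw [hB, det_mul, Matrix.det_nonsing_inv, Ring.inverse_eq_inv]
    exact mul_ne_zero (inv_ne_zero (hXdet i)) (hYdet i)
  have hpair : ∀ i i' : Fin r, i ≠ i' → (B i' - B i).det ≠ 0 := by
    intro i i' hii'
    have h2 := hA 2 (by norm_num) ![i, i'] ![c0, c1] (inj2' hii') (inj2' hc01)
    apply diff_det_ne_zero (Ne.isUnit (hXdet i)) (Ne.isUnit (hXdet i'))
    have heq : fromBlocks (X i) (Y i) (X i') (Y i') =
        (Matrix.of fun p q : Fin 2 × Fin j =>
          A ((![i, i'] : Fin 2 → Fin r) p.1, p.2)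
            ((![c0, c1] : Fin 2 → Fin u) q.1, q.2)).submatrix (sumProdEquiv j) (sumProdEquiv j) := by
      ext x y
      rcases x with a | a <;> rcases y with b | b <;>
        simp [sumProdEquiv, fromBlocks, hX, hY]
    rw [heq, Matrix.det_submatrix_equiv_self]
    exact h2
  -- the injection into F^j
  have hj0 : (0 : ℕ) < j := hj
  set z : Fin j := ⟨0, hj0⟩ with hz
  set g : Option (Fin r) → (Fin j → F) :=
    fun o => Option.elim o 0 (fun i => fun b => B i z b) with hg
  have hginj : Function.Injective g := by
    rintro (_ | i) (_ | i') h
    · rfl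
    · exfalso
      apply hBdet i'
      apply Matrix.det_eq_zero_of_row_eq_zero z
      intro b
      have := congrFun h b
      simp [hg] at this
      exact this.symm
    · exfalso
      apply hBdet i
      apply Matrix.det_eq_zero_of_row_eq_zero z
      intro b
      have := congrFun h b
      simp [hg] at this
      exact this
    · by_cases hii' : i = i'
      · rw [hii']
      · exfalso
        apply hpair i i' hii'
        apply Matrix.det_eq_zero_of_row_eq_zero z
        intro b
        have := congrFun h b
        simp [hg] at this
        simp [Matrix.sub_apply, this]
  have := Fintype.card_le_of_injective g hginj
  simpa [Fintype.card_option, Fintype.card_fun, hq] using this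

private lemma transpose_btn {F : Type*} [Field F] {r u j : ℕ}
    (A : Matrix (Fin r × Fin j) (Fin u × Fin j) F)
    (hA : IsBlockTotallyNonsingular A) : IsBlockTotallyNonsingular Aᵀ := by
  intro k hk ρ σ hρ hσ
  have h := hA k hk σ ρ hσ hρ
  have heq : (Matrix.of fun p q : Fin k × Fin j => Aᵀ (ρ p.1, p.2) (σ q.1, q.2)) =
      (Matrix.of fun p q : Fin k × Fin j => A (σ p.1, p.2) (ρ q.1, q.2))ᵀ := by
    ext p q; rfl
  rw [heq, Matrix.det_transpose]
  exact h

/-- Let r, u be integers with min{r,u} > 1, F a finite field with q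
elements, and j ≥ 1.  If there exists a block totally nonsingular r × u array of
invertible j × j blocks over F, then q^j ≥ r + 1 and q^j ≥ u + 1. -/
theorem stmt_7 {F : Type*} [Field F] [Fintype F] {q r u j : ℕ}
    (hq : Fintype.card F = q) (hr : 1 < r) (hu : 1 < u) (hj : 1 ≤ j)
    (A : Matrix (Fin r × Fin j) (Fin u × Fin j) F)
    (hA : IsBlockTotallyNonsingular A) :
    r + 1 ≤ q ^ j ∧ u + 1 ≤ q ^ j :=
  ⟨row_bound hq hu hj A hA, row_bound hq hr hj Aᵀ (transpose_btn A hA)⟩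
end

section
/- Let F be a field, let r ≤ u be positive integers, and let A ∈ F^{r×u} be a totally nonsingular matrix. Then the r × (r + u) matrix [I | A], obtained by appending the r × r identity matrix to A, is an MDS matrix: every r × r submatrix formed by selecting any r distinct columns of [I | A] is nonsingular. -/
/-!
A kernel vector `v` of the chosen `r` columns of `[I | A]`, extended by zero, is a kernel vector
`x` of `[I | A]` supported on at most `r` coordinates. If `x` uses `s` identity columns and `t`
columns of `A`, then on the `r - s ≥ t` rows missed by those identity columns the equation reads
`A x_A = 0`, so total nonsingularity of a `t × t` submatrix of `A` forces `x_A = 0`; the identity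
part then gives `x_I = -A x_A = 0`.
-/

/-- A matrix is totally nonsingular if every square submatrix (given by injections
selecting rows and columns) is nonsingular. -/
def IsTotallyNonsingular {F : Type*} [Field F] {r u : ℕ}
    (A : Matrix (Fin r) (Fin u) F) : Prop :=
  ∀ (k : ℕ), 1 ≤ k → ∀ (ρ : Fin k → Fin r) (σ : Fin k → Fin u),
    Function.Injective ρ → Function.Injective σ →
      (Matrix.of fun p q : Fin k => A (ρ p) (σ q)).det ≠ 0

/-- A matrix G with r rows (and columns indexed by an arbitrary type) is MDS if every
r × r submatrix formed by selecting any r distinct columns is nonsingular. -/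
def IsMDS {F : Type*} [Field F] {r : ℕ} {n : Type*}
    (G : Matrix (Fin r) n F) : Prop :=
  ∀ σ : Fin r → n, Function.Injective σ →
    (Matrix.of fun p q : Fin r => G p (σ q)).det ≠ 0

open Finset Matrix

theorem Matrix.mulVec_extend_of_injective {m n κ R : Type*} [Fintype n] [Fintype κ]
    [NonUnitalNonAssocSemiring R] (M : Matrix m n R) {σ : κ → n} (hσ : σ.Injective)
    (v : κ → R) : M *ᵥ Function.extend σ v 0 = M.submatrix id σ *ᵥ v := by
  ext p
  refine (Fintype.sum_of_injective σ hσ _ _ (fun c hc ↦ ?_) fun q ↦ ?_).symm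
  · simp [Function.extend_apply' _ _ _ hc]
  · simp [hσ.extend_apply]

namespace IsTotallyNonsingular

variable {F : Type*} [Field F] {r u : ℕ} {A : Matrix (Fin r) (Fin u) F}

theorem det_submatrix_ne_zero (hA : IsTotallyNonsingular A) {κ : Type*} [Fintype κ]
    [DecidableEq κ] {ρ : κ → Fin r} {τ : κ → Fin u} (hρ : ρ.Injective) (hτ : τ.Injective) :
    (A.submatrix ρ τ).det ≠ 0 := by
  let e := Fintype.equivFin κ
  rcases Nat.eq_zero_or_pos (Fintype.card κ) with hk | hk
  · have : IsEmpty κ := Fintype.card_eq_zero_iff.mp hk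
    simp
  · rw [← det_submatrix_equiv_self e.symm]
    exact hA _ hk _ _ (hρ.comp e.symm.injective) (hτ.comp e.symm.injective)

theorem eq_zero_of_mulVec_eq_zero_on (hA : IsTotallyNonsingular A) {y : Fin u → F}
    {R : Finset (Fin r)} {J : Finset (Fin u)} (hy : ∀ j ∉ J, y j = 0) (hJR : #J ≤ #R)
    (hAy : ∀ p ∈ R, (A *ᵥ y) p = 0) : y = 0 := by
  obtain ⟨R', hR'R, hR'J⟩ := exists_subset_card_eq hJR
  let e : J ≃ R' := Fintype.equivOfCardEq (by simp [hR'J])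
  have hsum : ∀ p, (A *ᵥ y) p = (A.submatrix id Subtype.val *ᵥ (y ∘ Subtype.val)) p := fun p ↦
    (sum_subset (subset_univ J) fun j _ hj ↦ by simp [hy j hj]).symm.trans
      (sum_coe_sort J _).symm
  have hyJ : y ∘ ((↑) : J → Fin u) = 0 :=
    eq_zero_of_mulVec_eq_zero
      (hA.det_submatrix_ne_zero (ρ := fun j ↦ (e j : Fin r)) (τ := (↑))
        (Subtype.val_injective.comp e.injective) Subtype.val_injective)
      (funext fun j ↦ (hsum (e j)).symm.trans (hAy _ (hR'R (e j).2)))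
  ext j
  by_cases hj : j ∈ J
  · exact congrFun hyJ ⟨j, hj⟩
  · exact hy j hj

theorem eq_zero_of_fromCols_one_mulVec_eq_zero (hA : IsTotallyNonsingular A)
    {x : Fin r ⊕ Fin u → F} {C : Finset (Fin r ⊕ Fin u)} (hx : ∀ c ∉ C, x c = 0)
    (hC : #C ≤ r) (hAx : fromCols (1 : Matrix (Fin r) (Fin r) F) A *ᵥ x = 0) : x = 0 := by
  have hrow : ∀ p, x (.inl p) + (A *ᵥ (x ∘ .inr)) p = 0 := fun p ↦ by
    simpa using congrFun hAx p
  -- Rows not hit by an identity column of the support see only `A`.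
  have hright : x ∘ .inr = 0 := by
    refine hA.eq_zero_of_mulVec_eq_zero_on (R := C.toLeftᶜ) (J := C.toRight)
      (fun j hj ↦ hx _ (mt mem_toRight.mpr hj)) ?_ fun p hp ↦ ?_
    · have := card_toLeft_add_card_toRight (u := C)
      rw [card_compl, Fintype.card_fin]
      omega
    · simpa [hx _ (mt mem_toLeft.mpr (mem_compl.mp hp))] using hrow p
  have hleft : x ∘ .inl = 0 := funext fun p ↦ by simpa [hright] using hrow p
  ext (p | j)
  · exact congrFun hleft p
  · exact congrFun hright j

end IsTotallyNonsingular

theorem stmt_8_general {F : Type*} [Field F] {r u : ℕ}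
    (A : Matrix (Fin r) (Fin u) F) (hA : IsTotallyNonsingular A) :
    IsMDS (Matrix.fromCols (1 : Matrix (Fin r) (Fin r) F) A) := by
  intro σ hσ hdet
  obtain ⟨v, hv0, hv⟩ := exists_mulVec_eq_zero_iff.mpr hdet
  have hx : Function.extend σ v 0 = 0 :=
    hA.eq_zero_of_fromCols_one_mulVec_eq_zero (C := univ.image σ)
      (fun c hc ↦ Function.extend_apply' _ _ _ (by simpa using hc))
      (card_image_le.trans (by simp))
      ((mulVec_extend_of_injective _ hσ v).trans hv)
  exact hv0 (funext fun q ↦ by simpa [hσ.extend_apply] using congrFun hx (σ q))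

/-- Let r ≤ u be positive integers and A ∈ F^{r×u} a totally nonsingular
matrix.  Then the r × (r + u) matrix [I | A] is an MDS matrix. -/
theorem stmt_8 {F : Type*} [Field F] {r u : ℕ}
    (hr : 0 < r) (hu : 0 < u) (hru : r ≤ u)
    (A : Matrix (Fin r) (Fin u) F) (hA : IsTotallyNonsingular A) :
    IsMDS (Matrix.fromCols (1 : Matrix (Fin r) (Fin r) F) A) :=
  stmt_8_general A hA
end

section
/- Let F be a field, let r ≤ u be positive integers, and let A ∈ F^{r×u}. If the r × (r + u) matrix [I | A], obtained by appending the r × r identity matrix to A, is an MDS matrix, then A is totally nonsingular: every square submatrix of A, of any size k with 1 ≤ k ≤ r, obtained by choosing any k rows and any k columns of A, is nonsingular. -/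
/-!
Choose the `k` columns `σ` of `A` together with the identity columns of the rows outside the
range of `ρ`. Listing the rows of `ρ` first, this `r × r` submatrix of `[I | A]` is block lower
triangular with diagonal blocks `A[ρ, σ]` and an identity matrix, so its determinant, which is
nonzero by the MDS property, equals `det A[ρ, σ]`.
-/

open Matrix

namespace Matrix

variable {R : Type*} [CommRing R] {ι κ m p : Type*} [DecidableEq ι]

theorem fromCols_one_submatrix_sumElim [DecidableEq p] (A : Matrix ι κ R) (e : m ⊕ p ≃ ι)
    (σ : m → κ) :
    (fromCols 1 A).submatrix e (Sum.elim (Sum.inr ∘ σ) (Sum.inl ∘ e ∘ Sum.inr)) =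
      fromBlocks (A.submatrix (e ∘ Sum.inl) σ) 0 (A.submatrix (e ∘ Sum.inr) σ) 1 := by
  ext (i | i) (j | j) <;> simp [one_apply, e.injective.eq_iff]

theorem det_fromCols_one_submatrix_sumElim [Fintype m] [Fintype p] [DecidableEq m]
    [DecidableEq p] (A : Matrix ι κ R) (e : m ⊕ p ≃ ι) (σ : m → κ) :
    ((fromCols 1 A).submatrix e (Sum.elim (Sum.inr ∘ σ) (Sum.inl ∘ e ∘ Sum.inr))).det =
      (A.submatrix (e ∘ Sum.inl) σ).det := by
  rw [fromCols_one_submatrix_sumElim, det_fromBlocks_zero₁₂, det_one, mul_one]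

end Matrix

theorem IsMDS.det_submatrix_ne_zero_of_fromCols_one {F : Type*} [Field F] {r : ℕ}
    {κ m p : Type*} [Fintype m] [Fintype p] [DecidableEq m] [DecidableEq p] {A : Matrix (Fin r) κ F}
    (hA : IsMDS (fromCols (1 : Matrix (Fin r) (Fin r) F) A)) (e : m ⊕ p ≃ Fin r) {σ : m → κ}
    (hσ : Function.Injective σ) : (A.submatrix (e ∘ Sum.inl) σ).det ≠ 0 := by
  set c := Sum.elim (Sum.inr ∘ σ) (Sum.inl ∘ e ∘ Sum.inr)
  have hc : Function.Injective c :=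
    (Sum.inr_injective.comp hσ).sumElim (Sum.inl_injective.comp (e.injective.comp
      Sum.inr_injective)) fun _ _ => Sum.inr_ne_inl
  have hsub : (fromCols 1 A).submatrix e c =
      (of fun i j => fromCols 1 A i ((c ∘ e.symm) j)).submatrix e e := by
    ext; simp
  rw [← det_fromCols_one_submatrix_sumElim A e σ, hsub, det_submatrix_equiv_self]
  exact hA (c ∘ e.symm) (hc.comp e.symm.injective)

theorem Function.Injective.exists_sumCompl_equiv {α β : Type*} {f : α → β}
    (hf : Function.Injective f) : ∃ e : α ⊕ {b // b ∉ Set.range f} ≃ β, e ∘ Sum.inl = f := by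
  classical
  exact ⟨(Equiv.sumCongr (Equiv.ofInjective f hf) (Equiv.refl _)).trans
    (Equiv.sumCompl (· ∈ Set.range f)), by funext; simp⟩

theorem stmt_9_general {F : Type*} [Field F] {r u : ℕ}
    (A : Matrix (Fin r) (Fin u) F)
    (hA : IsMDS (Matrix.fromCols (1 : Matrix (Fin r) (Fin r) F) A)) :
    IsTotallyNonsingular A := by
  intro k _ ρ σ hρ hσ
  classical
  obtain ⟨e, he⟩ := hρ.exists_sumCompl_equiv
  exact he ▸ hA.det_submatrix_ne_zero_of_fromCols_one e hσ

/-- Let r ≤ u be positive integers and A ∈ F^{r×u}.  If the r × (r + u)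
matrix [I | A] is an MDS matrix, then A is totally nonsingular. -/
theorem stmt_9 {F : Type*} [Field F] {r u : ℕ}
    (hr : 0 < r) (hu : 0 < u) (hru : r ≤ u)
    (A : Matrix (Fin r) (Fin u) F)
    (hA : IsMDS (Matrix.fromCols (1 : Matrix (Fin r) (Fin r) F) A)) :
    IsTotallyNonsingular A :=
  stmt_9_general A hA
end

section
/- Let F be a finite field and let r ≤ u be positive integers. There exists a totally nonsingular matrix A ∈ F^{r×u} (all of whose entries are nonzero) if and only if there exists an r × (r + u) MDS matrix over F. -/
/-
Multiplying an MDS matrix on the left by the inverse of its (necessarily invertible) first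
`r × r` block brings it to systematic form `[1 | A]` without affecting the MDS property, so it
suffices to show that `[1 | A]` is MDS exactly when `A` is totally nonsingular. Choosing the
identity columns indexed by a set `S` of rows and the columns `T` of `A`, and listing the rows
of `S` first, the chosen `r × r` minor becomes block upper triangular with diagonal blocks `1`
and `A[Sᶜ, T]`; hence it is nonzero iff the square minor `A[Sᶜ, T]` is, and every square minor
of `A` arises in this way.
-/

open Matrix Function

lemma exists_sum_equiv_inl_eq {m γ δ : Type*} [Fintype m] [Fintype γ] [Fintype δ]
    {s : γ → m} (hs : Injective s) (hcard : Fintype.card γ + Fintype.card δ = Fintype.card m) :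
    ∃ e : γ ⊕ δ ≃ m, ∀ a, e (Sum.inl a) = s a := by
  classical
  have hδ : Fintype.card δ = Fintype.card ↥(Set.range s)ᶜ := by
    rw [Fintype.card_compl_set, Set.card_range_of_injective hs]
    omega
  exact ⟨(Equiv.sumCongr (Equiv.ofInjective s hs) (Fintype.equivOfCardEq hδ)).trans
    (Equiv.Set.sumCompl _), fun a => by simp⟩

lemma det_fromCols_one_submatrix {R m n γ δ : Type*} [CommRing R] [Fintype m] [DecidableEq m]
    [Fintype γ] [DecidableEq γ] [Fintype δ] [DecidableEq δ]
    (A : Matrix m n R) (e : γ ⊕ δ ≃ m) (t : δ → n) :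
    ((fromCols 1 A).submatrix e (Sum.map (e ∘ Sum.inl) t)).det =
      (A.submatrix (e ∘ Sum.inr) t).det := by
  have : (fromCols 1 A).submatrix e (Sum.map (e ∘ Sum.inl) t) =
      fromBlocks 1 (A.submatrix (e ∘ Sum.inl) t) 0 (A.submatrix (e ∘ Sum.inr) t) := by
    ext (i | i) (j | j) <;> simp [one_apply, e.injective.eq_iff]
  rw [this, det_fromBlocks_zero₂₁, det_one, one_mul]

section

variable {F : Type*} [Field F] {r u : ℕ}

lemma det_submatrix_equiv_ne_zero_iff {m ι : Type*} [Fintype m] [DecidableEq m] [Fintype ι]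
    [DecidableEq ι] (M : Matrix m m F) (e₁ e₂ : ι ≃ m) :
    (M.submatrix e₁ e₂).det ≠ 0 ↔ M.det ≠ 0 := by
  simp only [ne_eq, ← isUnit_iff_ne_zero, ← isUnit_iff_isUnit_det, isUnit_submatrix_equiv]

lemma IsTotallyNonsingular.det_submatrix_ne_zero_s10 {A : Matrix (Fin r) (Fin u) F}
    (hA : IsTotallyNonsingular A) {δ : Type*} [Fintype δ] [DecidableEq δ]
    {c : δ → Fin r} {t : δ → Fin u} (hc : Injective c) (ht : Injective t) :
    (A.submatrix c t).det ≠ 0 := by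
  rcases (Fintype.card δ).eq_zero_or_pos with h0 | h0
  · have : IsEmpty δ := Fintype.card_eq_zero_iff.mp h0
    simp
  · let e := (Fintype.equivFin δ).symm
    rw [← det_submatrix_equiv_self e]
    exact hA _ h0 (c ∘ e) (t ∘ e) (hc.comp e.injective) (ht.comp e.injective)

lemma IsTotallyNonsingular.apply_ne_zero {A : Matrix (Fin r) (Fin u) F}
    (hA : IsTotallyNonsingular A) (i : Fin r) (j : Fin u) : A i j ≠ 0 := by
  simpa using hA 1 le_rfl (fun _ => i) (fun _ => j) (injective_of_subsingleton _)
    (injective_of_subsingleton _)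

lemma IsMDS.submatrix {m n : Type*} {G : Matrix (Fin r) n F} (hG : IsMDS G)
    {f : m → n} (hf : Injective f) : IsMDS (G.submatrix id f) :=
  fun σ hσ => hG (f ∘ σ) (hf.comp hσ)

lemma IsMDS.det_submatrix_ne_zero_s10 {n ι : Type*} [Fintype ι] [DecidableEq ι]
    {G : Matrix (Fin r) n F} (hG : IsMDS G) (e : ι ≃ Fin r) {σ : ι → n} (hσ : Injective σ) :
    (G.submatrix e σ).det ≠ 0 := by
  have := hG (σ ∘ e.symm) (hσ.comp e.symm.injective)
  rw [← det_submatrix_equiv_self e] at this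
  convert this using 2
  ext
  simp

lemma IsMDS.mul_left {n : Type*} {G : Matrix (Fin r) n F} (hG : IsMDS G)
    {B : Matrix (Fin r) (Fin r) F} (hB : B.det ≠ 0) : IsMDS (B * G) := by
  intro σ hσ
  change (B * G.submatrix id σ).det ≠ 0
  rw [det_mul]
  exact mul_ne_zero hB (hG σ hσ)

lemma IsTotallyNonsingular.isMDS_fromCols_one {A : Matrix (Fin r) (Fin u) F}
    (hA : IsTotallyNonsingular A) : IsMDS (fromCols (1 : Matrix (Fin r) (Fin r) F) A) := by
  classical
  intro σ hσ
  let p : Fin r → Prop := fun q => (σ q).isLeft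
  let s : {q // p q} → Fin r := fun q => (σ q).getLeft q.2
  let t : {q // ¬p q} → Fin u := fun q => (σ q).getRight (Sum.not_isLeft.mp q.2)
  let f := (Equiv.sumCompl p).symm
  -- `s` picks the identity columns, `t` the columns of `A`; `e` then orders the rows so that
  -- the chosen minor is block triangular with diagonal blocks `1` and `A.submatrix (e ∘ inr) t`.
  have hσ_eq : σ = Sum.map s t ∘ f := by
    funext q
    by_cases hq : p q
    · simp [f, s, Equiv.sumCompl_symm_apply_of_pos hq]
    · simp [f, t, Equiv.sumCompl_symm_apply_of_neg hq]
  obtain ⟨hs, ht⟩ := Sum.map_injective.mp (by simpa [hσ_eq] using hσ.comp f.symm.injective)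
  obtain ⟨e, he⟩ := exists_sum_equiv_inl_eq (δ := {q // ¬p q}) hs
    (by rw [← Fintype.card_sum]; exact (Fintype.card_congr f).symm)
  have hes : e ∘ Sum.inl = s := funext he
  have : (of fun p q => fromCols 1 A p (σ q)) =
      ((fromCols 1 A).submatrix e (Sum.map (e ∘ Sum.inl) t)).submatrix e.symm f := by
    rw [hes, hσ_eq]
    ext
    simp
  rw [this, det_submatrix_equiv_ne_zero_iff, det_fromCols_one_submatrix]
  exact hA.det_submatrix_ne_zero_s10 (e.injective.comp Sum.inr_injective) ht

lemma IsMDS.isTotallyNonsingular_of_fromCols_one {A : Matrix (Fin r) (Fin u) F}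
    (hG : IsMDS (fromCols (1 : Matrix (Fin r) (Fin r) F) A)) : IsTotallyNonsingular A := by
  classical
  intro k _ ρ σ hρ hσ
  let γ := ↥(Set.range ρ)ᶜ
  have hcard : Fintype.card (Fin k) + Fintype.card γ = Fintype.card (Fin r) := by
    have := Fintype.card_le_of_injective ρ hρ
    simp only [γ, Fintype.card_compl_set, Set.card_range_of_injective hρ, Fintype.card_fin] at *
    omega
  obtain ⟨e, he⟩ := exists_sum_equiv_inl_eq hρ hcard
  let e' := (Equiv.sumComm γ (Fin k)).trans e
  have he' : e' ∘ Sum.inr = ρ := funext he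
  change (A.submatrix ρ σ).det ≠ 0
  rw [← he', ← det_fromCols_one_submatrix]
  exact hG.det_submatrix_ne_zero_s10 e' ((e'.injective.comp Sum.inl_injective).sumMap hσ)

lemma isMDS_fromCols_one_iff {A : Matrix (Fin r) (Fin u) F} :
    IsMDS (fromCols (1 : Matrix (Fin r) (Fin r) F) A) ↔ IsTotallyNonsingular A :=
  ⟨IsMDS.isTotallyNonsingular_of_fromCols_one, IsTotallyNonsingular.isMDS_fromCols_one⟩

lemma IsMDS.exists_isMDS_fromCols_one {n : Type*} {G : Matrix (Fin r) (Fin r ⊕ n) F}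
    (hG : IsMDS G) :
    ∃ A : Matrix (Fin r) n F, IsMDS (fromCols (1 : Matrix (Fin r) (Fin r) F) A) := by
  have hB : IsUnit G.toCols₁.det := isUnit_iff_ne_zero.mpr (hG Sum.inl Sum.inl_injective)
  refine ⟨G.toCols₁⁻¹ * G.toCols₂, ?_⟩
  rw [← nonsing_inv_mul _ hB, ← mul_fromCols, fromCols_toCols]
  exact hG.mul_left (isUnit_nonsing_inv_det _ hB).ne_zero

end

theorem stmt_10_general {F : Type*} [Field F] {r u : ℕ} :
    (∃ A : Matrix (Fin r) (Fin u) F,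
        IsTotallyNonsingular A ∧ ∀ i k, A i k ≠ 0) ↔
    (∃ G : Matrix (Fin r) (Fin (r + u)) F, IsMDS G) := by
  constructor
  · rintro ⟨A, hA, -⟩
    exact ⟨_, (isMDS_fromCols_one_iff.mpr hA).submatrix finSumFinEquiv.symm.injective⟩
  · rintro ⟨G, hG⟩
    obtain ⟨A, hA⟩ := (hG.submatrix finSumFinEquiv.injective).exists_isMDS_fromCols_one
    have hA := isMDS_fromCols_one_iff.mp hA
    exact ⟨A, hA, hA.apply_ne_zero⟩

/-- Let F be a finite field and r ≤ u positive integers.  There exists a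
totally nonsingular matrix A ∈ F^{r×u} (all of whose entries are nonzero) if and only
if there exists an r × (r + u) MDS matrix over F. -/
theorem stmt_10 {F : Type*} [Field F] [Fintype F] {r u : ℕ}
    (hr : 0 < r) (hu : 0 < u) (hru : r ≤ u) :
    (∃ A : Matrix (Fin r) (Fin u) F,
        IsTotallyNonsingular A ∧ ∀ i k, A i k ≠ 0) ↔
    (∃ G : Matrix (Fin r) (Fin (r + u)) F, IsMDS G) :=
  stmt_10_general
end

section
/- Let F be a finite field with q elements and let r be an integer with 1 ≤ r ≤ q. Fix an enumeration F = {α_1, …, α_q}. Let G be the r × (q + 1) matrix whose i-th column, for i ∈ [q], is (1, α_i, α_i², …, α_i^{r−1})ᵀ, and whose last column is the standard basis vector e_r = (0, …, 0, 1)ᵀ. Then G is an MDS matrix: every r × r submatrix formed by selecting any r distinct columns of G is nonsingular. -/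
theorem Matrix.det_eq_of_col_eq_single_last {R : Type*} [CommRing R] {n : ℕ}
    (A : Matrix (Fin (n + 1)) (Fin (n + 1)) R) (j : Fin (n + 1))
    (hA : (fun i => A i j) = Pi.single (Fin.last n) 1) :
    A.det = (-1) ^ (n + j : ℕ) * (A.submatrix Fin.castSucc j.succAbove).det := by
  rw [det_succ_column A j,
    Fintype.sum_eq_single (Fin.last n) fun i hi => by simp [congrFun hA i, hi]]
  simp [congrFun hA, Fin.succAbove_last]

theorem Matrix.det_of_pow_ne_zero {F : Type*} [Field F] {n : ℕ} {v : Fin n → F}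
    (hv : Function.Injective v) : (Matrix.of fun p j : Fin n => v j ^ (p : ℕ)).det ≠ 0 := by
  rw [← det_transpose]
  exact det_vandermonde_ne_zero_iff.2 hv

theorem IsMDS.submatrix_col {F : Type*} [Field F] {r : ℕ} {n m : Type*}
    {G : Matrix (Fin r) n F} (hG : IsMDS G) {e : m → n} (he : Function.Injective e) :
    IsMDS (G.submatrix id e) :=
  fun σ hσ => hG (e ∘ σ) (he.comp hσ)

theorem isMDS_of_pow_of_single_last {F ι : Type*} [Field F] {m : ℕ} {v : ι → F}
    (hv : Function.Injective v) (G : Matrix (Fin (m + 1)) (Option ι) F)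
    (hG_some : ∀ p i, G p (some i) = v i ^ (p : ℕ))
    (hG_none : (fun p => G p none) = Pi.single (Fin.last m) 1) :
    IsMDS G := by
  intro σ hσ
  by_cases hnone : ∃ j, σ j = none
  · obtain ⟨j, hj⟩ := hnone
    have hsome : ∀ k, σ (j.succAbove k) ≠ none := fun k h =>
      Fin.succAbove_ne j k (hσ (h.trans hj.symm))
    choose τ hτ using fun k => Option.ne_none_iff_exists'.1 (hsome k)
    have hτ_inj : Function.Injective τ := fun a b hab =>
      Fin.succAbove_right_injective (hσ (by rw [hτ, hτ, hab]))
    rw [Matrix.det_eq_of_col_eq_single_last _ j (by simp [hj, ← hG_none])]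
    refine mul_ne_zero (pow_ne_zero _ (neg_ne_zero.2 one_ne_zero)) ?_
    convert Matrix.det_of_pow_ne_zero (hv.comp hτ_inj) using 2
    ext p k
    simp [hτ, hG_some]
  · push Not at hnone
    choose τ hτ using fun k => Option.ne_none_iff_exists'.1 (hnone k)
    have hτ_inj : Function.Injective τ := fun a b hab => hσ (by rw [hτ, hτ, hab])
    convert Matrix.det_of_pow_ne_zero (hv.comp hτ_inj) using 2
    ext p k
    simp [hτ, hG_some]

theorem stmt_11_general {F : Type*} [Field F] {q r : ℕ}
    (hr : 1 ≤ r)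
    (α : Fin q ≃ F)
    (G : Matrix (Fin r) (Fin (q + 1)) F)
    (hG : ∀ (p : Fin r) (i : Fin (q + 1)),
      G p i = if h : (i : ℕ) < q then (α ⟨i, h⟩) ^ (p : ℕ)
              else if (p : ℕ) = r - 1 then 1 else 0) :
    IsMDS G := by
  obtain ⟨m, rfl⟩ : ∃ m, r = m + 1 := ⟨r - 1, by omega⟩
  have hMDS : IsMDS (G.submatrix id finSuccEquivLast.symm) := by
    refine isMDS_of_pow_of_single_last α.injective _ (fun p i => by simp [hG]) ?_
    ext p
    simp [hG, Pi.single_apply, Fin.ext_iff]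
  simpa using hMDS.submatrix_col finSuccEquivLast.injective

/-- Let F be a finite field with q elements, 1 ≤ r ≤ q, and fix an
enumeration α : Fin q ≃ F.  The r × (q + 1) matrix whose i-th column (i < q) is
(1, α_i, α_i², …, α_i^{r−1})ᵀ and whose last column is (0, …, 0, 1)ᵀ is an MDS
matrix. -/
theorem stmt_11 {F : Type*} [Field F] [Fintype F] {q r : ℕ}
    (hq : Fintype.card F = q) (hr : 1 ≤ r) (hrq : r ≤ q)
    (α : Fin q ≃ F)
    (G : Matrix (Fin r) (Fin (q + 1)) F)
    (hG : ∀ (p : Fin r) (i : Fin (q + 1)),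
      G p i = if h : (i : ℕ) < q then (α ⟨i, h⟩) ^ (p : ℕ)
              else if (p : ℕ) = r - 1 then 1 else 0) :
    IsMDS G :=
  stmt_11_general hr α G hG
end

section
/- Let F be a finite field with Q elements, and let r, u be positive integers with r ≤ u, r ≤ Q, and u ≤ Q + 1 if Q is odd or r ∉ {3, Q − 1}, while u ≤ Q + 2 is allowed if Q is even and r ∈ {3, Q − 1}. Then there exists an r × u MDS matrix over F. -/
open Matrix Function

section

variable {F : Type*} [Field F]

theorem IsMDS.exists_of_le_card {r : ℕ} {n : Type*} [Fintype n] {G : Matrix (Fin r) n F}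
    (hG : IsMDS G) {u : ℕ} (hu : u ≤ Fintype.card n) :
    ∃ G' : Matrix (Fin r) (Fin u) F, IsMDS G' := by
  obtain ⟨f⟩ := Function.Embedding.nonempty_of_card_le (α := Fin u) (β := n) (by simpa using hu)
  exact ⟨G.submatrix id f, fun σ hσ => hG (f ∘ σ) (f.injective.comp hσ)⟩

theorem det_transpose_vandermonde_ne_zero {k : ℕ} {x : Fin k → F} (hx : Injective x) :
    (of fun i q : Fin k => x q ^ (i : ℕ)).det ≠ 0 := by
  rw [← det_transpose]
  exact det_vandermonde_ne_zero_iff.2 hx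

-- The doubly extended Reed–Solomon code: `Option F` is the projective line, and the point at
-- infinity `none` gets the last unit vector as its column.
def extendedRS (F : Type*) [Field F] (m : ℕ) : Matrix (Fin (m + 1)) (Option F) F :=
  of fun i o => o.elim ((Pi.single (Fin.last m) 1 : Fin (m + 1) → F) i) (· ^ (i : ℕ))

theorem isMDS_extendedRS (m : ℕ) : IsMDS (extendedRS F m) := by
  intro σ hσ
  by_cases hinf : ∃ q₀, σ q₀ = none
  · obtain ⟨q₀, hq₀⟩ := hinf
    choose x hx using fun t => Option.ne_none_iff_exists'.1
      fun h => q₀.succAbove_ne t (hσ (h.trans hq₀.symm))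
    have hxinj : Injective x := fun t t' h =>
      q₀.succAbove_right_injective (hσ (by rw [hx, hx, h]))
    -- expand along the column at infinity, whose only nonzero entry is in the last row
    rw [det_succ_column _ q₀, Finset.sum_eq_single (Fin.last m)]
    · simp only [of_apply, hq₀, extendedRS, Option.elim_none, Pi.single_eq_same, mul_one,
        Fin.succAbove_last]
      refine mul_ne_zero (pow_ne_zero _ (neg_ne_zero.2 one_ne_zero)) ?_
      convert det_transpose_vandermonde_ne_zero hxinj using 2
      ext i t
      simp [hx]
    · intro i _ hi
      simp [hq₀, extendedRS, hi]
    · simp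
  · push Not at hinf
    choose x hx using fun q => Option.ne_none_iff_exists'.1 (hinf q)
    convert det_transpose_vandermonde_ne_zero (x := x) fun q q' h => hσ (by rw [hx, hx, h])
      using 2
    ext i q
    simp [hx, extendedRS]

def IsSuperregular {m n : Type*} (B : Matrix m n F) : Prop :=
  ∀ (k : ℕ) (s : Fin k → m) (t : Fin k → n), Injective s → Injective t →
    (B.submatrix s t).det ≠ 0

theorem Sum.nonempty_embedding_not_inl {α β γ : Type*} [Finite α] [Finite β] (σ : α → β ⊕ γ)
    (h : Nat.card α ≤ Nat.card β) :
    Nonempty ({a // ¬∃ b, σ a = .inl b} ↪ {b // ¬∃ a, σ a = .inl b}) := by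
  classical
  have := Fintype.ofFinite α
  have := Fintype.ofFinite β
  have hsurj : Surjective fun a : {a // ∃ b, σ a = .inl b} =>
      (⟨a.2.choose, a, a.2.choose_spec⟩ : {b // ∃ a, σ a = .inl b}) :=
    fun ⟨b, a, ha⟩ => ⟨⟨a, b, ha⟩, Subtype.ext <|
      Sum.inl_injective ((⟨b, ha⟩ : ∃ b, σ a = .inl b).choose_spec.symm.trans ha)⟩
  have := Fintype.card_le_of_surjective _ hsurj
  refine Function.Embedding.nonempty_of_card_le ?_
  simp only [Nat.card_eq_fintype_card, Fintype.card_subtype_compl] at h ⊢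
  omega

namespace IsSuperregular

variable {m n : Type*} {B : Matrix m n F}

theorem transpose (hB : IsSuperregular B) : IsSuperregular Bᵀ := fun k s t hs ht => by
  rw [← transpose_submatrix, det_transpose]
  exact hB k t s ht hs

theorem eq_zero_of_submatrix_mulVec_eq_zero (hB : IsSuperregular B) {ι : Type*} [Fintype ι]
    [DecidableEq ι] {s : ι → m} {t : ι → n} (hs : Injective s) (ht : Injective t) {d : ι → F}
    (hd : B.submatrix s t *ᵥ d = 0) : d = 0 := by
  let e := (Fintype.equivFin ι).symm
  refine eq_zero_of_mulVec_eq_zero ?_ hd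
  rw [← det_submatrix_equiv_self e]
  exact hB _ (s ∘ e) (t ∘ e) (hs.comp e.injective) (ht.comp e.injective)

-- A kernel vector `v` of a square submatrix of `[1 | B]` vanishes on the columns taken from `B`:
-- the rows missed by the unit columns give as many equations in a square submatrix of `B`.
-- Each unit column then reads off one more entry of `v` as zero.
theorem isMDS_fromCols_one {r : ℕ} {B : Matrix (Fin r) n F} (hB : IsSuperregular B) :
    IsMDS (fromCols (1 : Matrix (Fin r) (Fin r) F) B) := by
  classical
  intro σ hσ hdet
  obtain ⟨v, hv, hσv⟩ := exists_mulVec_eq_zero_iff.2 hdet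
  have hrow (i : Fin r) : ∑ q, fromCols 1 B i (σ q) * v q = 0 := congrFun hσv i
  obtain ⟨s⟩ := Sum.nonempty_embedding_not_inl σ (by simp)
  have hinr (q : {q // ¬∃ j, σ q = .inl j}) : ∃ b, σ q = .inr b := by
    rcases h : σ q.1 with j | b
    exacts [(q.2 ⟨j, h⟩).elim, ⟨b, rfl⟩]
  choose t ht using hinr
  have hvP : ∀ q : {q // ¬∃ j, σ q = .inl j}, v q = 0 := by
    refine congrFun (hB.eq_zero_of_submatrix_mulVec_eq_zero (s := fun p => (s p).1) (t := t)
      (Subtype.val_injective.comp s.injective) (fun q q' h => Subtype.ext (hσ ?_)) ?_)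
    · rw [ht, ht, h]
    · funext p
      have hsp := hrow (s p)
      rw [← Fintype.sum_subtype_add_sum_subtype (fun q => ¬∃ j, σ q = .inl j),
        Fintype.sum_eq_zero (fun q : {q // ¬¬∃ j, σ q = .inl j} => _) ?_, add_zero] at hsp
      · simpa [mulVec, dotProduct, ht] using hsp
      · rintro ⟨q, hq⟩
        obtain ⟨j, hj⟩ := not_not.1 hq
        have hpj : (s p).1 ≠ j := fun h => (s p).2 ⟨q, h ▸ hj⟩
        simp [hj, one_apply_ne hpj]
  apply hv
  funext q
  rcases hq : σ q with j | b
  · have := hrow j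
    rw [Fintype.sum_eq_single q] at this
    · simpa [hq] using this
    · intro q' hqq'
      rcases hq' : σ q' with j' | b'
      · have hj : j ≠ j' := fun h => hqq' (hσ (by rw [hq, hq', h]))
        simp [one_apply_ne hj]
      · simp [hvP ⟨q', by simp [hq']⟩]
  · exact hvP ⟨q, by simp [hq]⟩

end IsSuperregular

section CharTwo

variable [CharP F 2]

theorem pow_mul_pow_ne_pow_mul_pow {a b : F} (ha : a ≠ 0) (hb : b ≠ 0) (hab : a ≠ b) {i j : ℕ}
    (hij : i < j) (hj : j ≤ 2) : a ^ i * b ^ j ≠ a ^ j * b ^ i := by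
  obtain ⟨d, rfl⟩ := Nat.exists_eq_add_of_lt hij
  have hd : b ^ (d + 1) - a ^ (d + 1) ≠ 0 := by
    refine sub_ne_zero.2 fun h => hab ?_
    have hd1 : d ≤ 1 := by omega
    interval_cases d
    exacts [(by simpa using h.symm), (frobenius_inj F 2 h).symm]
  intro h
  have : a ^ i * b ^ i * (b ^ (d + 1) - a ^ (d + 1)) = 0 := by linear_combination h
  exact hd ((mul_eq_zero.1 this).resolve_left (mul_ne_zero (pow_ne_zero _ ha) (pow_ne_zero _ hb)))

theorem isSuperregular_pow_fin_three {ι : Type*} {x : ι → F} (hx : Injective x)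
    (hx0 : ∀ a, x a ≠ 0) : IsSuperregular (of fun (i : Fin 3) (a : ι) => x a ^ (i : ℕ)) := by
  intro k s t hs ht
  have hk : k ≤ 3 := by simpa using Fintype.card_le_of_injective s hs
  interval_cases k
  · simp
  · simp [hx0]
  · have hx01 : x (t 0) ≠ x (t 1) := hx.ne (ht.ne (by decide))
    rw [det_fin_two]
    simp only [submatrix_apply, of_apply, sub_ne_zero]
    rcases Fin.lt_or_lt_of_ne (hs.ne (show (0 : Fin 2) ≠ 1 by decide)) with h | h
    · exact fun h' => pow_mul_pow_ne_pow_mul_pow (hx0 _) (hx0 _) hx01 h (by omega)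
        (by linear_combination h')
    · exact fun h' => pow_mul_pow_ne_pow_mul_pow (hx0 _) (hx0 _) hx01.symm h (by omega)
        (by linear_combination h')
  · -- `s` is a permutation of the three rows, so the minor is a permuted Vandermonde determinant
    let e := Equiv.ofBijective s ((Fintype.bijective_iff_injective_and_card s).2 ⟨hs, rfl⟩)
    have hdet := det_permute e (of fun (i : Fin 3) (q : Fin 3) => x (t q) ^ (i : ℕ))
    refine hdet ▸ mul_ne_zero ?_ (det_transpose_vandermonde_ne_zero (hx.comp ht))
    rcases Int.units_eq_one_or (Equiv.Perm.sign e) with h | h <;> simp [h]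

end CharTwo

end

theorem stmt_13_general {F : Type*} [Field F] [Fintype F] {Q r u : ℕ}
    (hQ : Fintype.card F = Q)
    (hr : 0 < r)
    (hu2 : u ≤ Q + 2)
    (hu1 : (Odd Q ∨ (r ≠ 3 ∧ r ≠ Q - 1)) → u ≤ Q + 1) :
    ∃ G : Matrix (Fin r) (Fin u) F, IsMDS G := by
  classical
  rcases le_or_gt u (Q + 1) with hu | hu
  · obtain ⟨m, rfl⟩ := Nat.exists_eq_add_one_of_ne_zero hr.ne'
    exact (isMDS_extendedRS m).exists_of_le_card (by simpa [hQ] using hu)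
  obtain ⟨hQ2, hr3⟩ : Even Q ∧ (r = 3 ∨ r = Q - 1) := by
    by_contra h
    exact hu.not_ge (hu1 (by grind [Nat.not_even_iff_odd]))
  have : CharP F 2 :=
    ringChar.of_eq (FiniteField.even_card_iff_char_two.2 (hQ ▸ Nat.even_iff.1 hQ2))
  have hQ1 : 1 ≤ Q := hQ ▸ Fintype.card_pos
  have hB := isSuperregular_pow_fin_three (x := ((↑) : Fˣ → F)) Units.val_injective Units.ne_zero
  rcases hr3 with rfl | rfl
  · refine hB.isMDS_fromCols_one.exists_of_le_card ?_
    simp only [Fintype.card_sum, Fintype.card_fin, Fintype.card_units, hQ]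
    omega
  · obtain ⟨e⟩ := Function.Embedding.nonempty_of_card_le (α := Fin (Q - 1)) (β := Fˣ)
      (by simp [Fintype.card_units, hQ])
    have hBe := (isSuperregular_pow_fin_three (x := fun a => (e a : F))
      (Units.val_injective.comp e.injective) fun _ => Units.ne_zero _).transpose
    refine hBe.isMDS_fromCols_one.exists_of_le_card ?_
    simp only [Fintype.card_sum, Fintype.card_fin]
    omega

/-- Let F be a finite field with Q elements, and r, u positive integers
with r ≤ u and r ≤ Q.  Suppose u ≤ Q + 2, and moreover u ≤ Q + 1 if Q is odd or
r ∉ {3, Q − 1}.  Then there exists an r × u MDS matrix over F. -/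
theorem stmt_13 {F : Type*} [Field F] [Fintype F] {Q r u : ℕ}
    (hQ : Fintype.card F = Q)
    (hr : 0 < r) (hu : 0 < u) (hru : r ≤ u) (hrQ : r ≤ Q)
    (hu2 : u ≤ Q + 2)
    (hu1 : (Odd Q ∨ (r ≠ 3 ∧ r ≠ Q - 1)) → u ≤ Q + 1) :
    ∃ G : Matrix (Fin r) (Fin u) F, IsMDS G :=
  stmt_13_general hQ hr hu2 hu1
end

section
/- Let F be a finite field with q elements and let s, d, t be positive integers with s > dt. Let j be a positive integer such that either q^j + 1 ≥ s, or q^j is even, s − dt ∈ {3, q^j − 1}, and q^j + 2 ≥ s. Then there exists a linear code C ⊆ F^{js} of length js and dimension j(s − dt), together with a surjective labeling L : [js] → [s], such that every nonzero codeword of C has labelweight at least dt + 1. -/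
/-!
Let `K` be the extension of `F` of degree `j`, so `|K| = q ^ j`. It suffices to find a `K`-linear
MDS code of length `s` and dimension `s - dt`, i.e. of minimum distance `dt + 1`: writing every
coordinate in an `F`-basis of `K` turns it into an `F`-linear code of length `js` and dimension
`j (s - dt)`, and labelling each new coordinate by the old one it comes from makes the label weight
of a word equal to the Hamming weight of the original word.

For `s ≤ q ^ j + 1` a (punctured) doubly extended Reed–Solomon code does it. For `s = q ^ j + 2` in
characteristic `2`, take the `q ^ j + 2` points of a hyperoval in `K³`, no three of which lie in a
plane: the evaluation code of linear forms at these points has dimension `3` and distance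
`q ^ j`, and the code of linear relations among them has dimension `q ^ j - 1` and distance `4`.
-/

open Module Finset Polynomial

theorem card_filter_option {α : Type*} [Fintype α] (P : Option α → Prop) [DecidablePred P] :
    #{o | P o} = (if P none then 1 else 0) + #{a | P (some a)} := by
  simp only [card_filter, Fintype.sum_option]

theorem hammingNorm_eq_card_sub {ι K : Type*} [Fintype ι] [Zero K] [DecidableEq K]
    (x : ι → K) : hammingNorm x = Fintype.card ι - #{i | x i = 0} := by
  rw [← card_univ, ← card_filter_add_card_filter_not (fun i => x i = 0), hammingNorm]
  simp only [ne_eq, Nat.add_sub_cancel_left]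

theorem exists_dual_ne_zero_of_card_lt_finrank {K V ι : Type*} [Field K] [AddCommGroup V]
    [Module K V] [FiniteDimensional K V] (v : ι → V) (U : Finset ι) (hU : #U < finrank K V) :
    ∃ f : Dual K V, f ≠ 0 ∧ ∀ i ∈ U, f (v i) = 0 := by
  classical
  have hspan : Submodule.span K (v '' U) < ⊤ := by
    refine lt_top_iff_ne_top.mpr fun htop => ?_
    have := (finrank_span_finset_le_card (R := K) (U.image v)).trans card_image_le
    rw [coe_image, Set.finrank, htop, finrank_top] at this
    omega
  obtain ⟨f, hf, hker⟩ := (Submodule.span K (v '' U)).exists_le_ker_of_lt_top hspan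
  exact ⟨f, hf, fun i hi => hker (Submodule.subset_span ⟨i, hi, rfl⟩)⟩

section Codes

variable {K V ι : Type*} [Field K] [DecidableEq K] [AddCommGroup V] [Module K V] [Fintype ι]

theorem exists_code_range_of_le_hammingNorm (Φ : V →ₗ[K] ι → K) {w : ℕ} (hw : 0 < w)
    (hΦ : ∀ v, v ≠ 0 → w ≤ hammingNorm (Φ v)) :
    ∃ W : Submodule K (ι → K), finrank K W = finrank K V ∧
      ∀ c ∈ W, c ≠ 0 → w ≤ hammingNorm c := by
  have hinj : Function.Injective Φ := by
    refine (injective_iff_map_eq_zero Φ).mpr fun v hv => ?_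
    by_contra hv0
    simpa [hv] using (hw.trans_le (hΦ v hv0))
  refine ⟨LinearMap.range Φ, LinearMap.finrank_range_of_inj hinj, ?_⟩
  rintro _ ⟨v, rfl⟩ hc
  exact hΦ v fun hv => hc (by rw [hv, map_zero])

theorem span_range_eq_top_of_card_filter_lt (v : ι → V) (hcard : finrank K V ≤ Fintype.card ι)
    (hv : ∀ f : Dual K V, f ≠ 0 → #{i | f (v i) = 0} < finrank K V) :
    Submodule.span K (Set.range v) = ⊤ := by
  by_contra hspan
  obtain ⟨f, hf, hker⟩ := (Submodule.span K (Set.range v)).exists_le_ker_of_lt_top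
    (lt_top_iff_ne_top.mpr hspan)
  have hzero : ∀ i, f (v i) = 0 := fun i => hker (Submodule.subset_span ⟨i, rfl⟩)
  have := hv f hf
  simp [hzero] at this
  omega

-- If `x` had at most `m = finrank K V` nonzero entries, a functional vanishing on `m - 1` columns
-- that include all of its support but `i₀` would, by the relation `x`, also vanish on `v i₀`.
theorem finrank_lt_hammingNorm_of_sum_smul_eq_zero [FiniteDimensional K V] (v : ι → V)
    (hcard : finrank K V ≤ Fintype.card ι)
    (hv : ∀ f : Dual K V, f ≠ 0 → #{i | f (v i) = 0} < finrank K V)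
    {x : ι → K} (hx : ∑ i, x i • v i = 0) (hx0 : x ≠ 0) : finrank K V < hammingNorm x := by
  classical
  by_contra! hle
  obtain ⟨i₀, hi₀ : x i₀ ≠ 0⟩ := Function.ne_iff.mp hx0
  set S : Finset ι := {i | x i ≠ 0}
  have hpos : 0 < finrank K V := (card_pos.mpr ⟨i₀, by simpa [S] using hi₀⟩).trans_le hle
  obtain ⟨U, hSU, hU, hUcard⟩ := exists_subsuperset_card_eq (s := S.erase i₀)
    (t := univ.erase i₀) (n := finrank K V - 1) (erase_subset_erase _ (subset_univ _))
    (by rw [card_erase_of_mem (by simpa [S] using hi₀)]; exact Nat.sub_le_sub_right hle 1)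
    (by rw [card_erase_of_mem (mem_univ _), card_univ]; exact Nat.sub_le_sub_right hcard 1)
  obtain ⟨f, hf, hU0⟩ := exists_dual_ne_zero_of_card_lt_finrank (K := K) v U (by omega)
  have hi₀0 : f (v i₀) = 0 := by
    have hsum := congrArg f hx
    rw [map_sum, map_zero, sum_eq_single i₀] at hsum
    · simpa [hi₀] using hsum
    · intro i _ hi
      by_cases hxi : x i = 0
      · simp [hxi]
      · simp [hU0 i (hSU (by simpa [S, hi] using hxi))]
    · simp
  have hsub : insert i₀ U ⊆ ({i | f (v i) = 0} : Finset ι) := by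
    intro i hi
    rcases mem_insert.mp hi with rfl | hi
    · simpa using hi₀0
    · simpa using hU0 i hi
  have hi₀U : i₀ ∉ U := fun h => by simpa using hU h
  have := (card_le_card hsub).trans_lt (hv f hf)
  rw [card_insert_of_notMem hi₀U] at this
  omega

theorem exists_code_ker_of_card_filter_lt [FiniteDimensional K V] (v : ι → V)
    (hcard : finrank K V ≤ Fintype.card ι)
    (hv : ∀ f : Dual K V, f ≠ 0 → #{i | f (v i) = 0} < finrank K V) :
    ∃ W : Submodule K (ι → K), finrank K W = Fintype.card ι - finrank K V ∧
      ∀ c ∈ W, c ≠ 0 → finrank K V + 1 ≤ hammingNorm c := by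
  set H := Fintype.linearCombination K v
  have hrange : LinearMap.range H = ⊤ := by
    rw [Fintype.range_linearCombination, span_range_eq_top_of_card_filter_lt v hcard hv]
  refine ⟨LinearMap.ker H, ?_, fun c hc hc0 => ?_⟩
  · have := LinearMap.finrank_range_add_finrank_ker H
    rw [hrange, finrank_top, finrank_fintype_fun_eq_card] at this
    omega
  · rw [LinearMap.mem_ker, Fintype.linearCombination_apply] at hc
    exact finrank_lt_hammingNorm_of_sum_smul_eq_zero v hcard hv hc hc0

end Codes

theorem Polynomial.finrank_degreeLT (K : Type*) [Field K] (k : ℕ) :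
    finrank K (degreeLT K k) = k := by
  rw [(degreeLTEquiv K k).finrank_eq, finrank_fin_fun]

section ReedSolomon

variable {K : Type*} [Field K] [Fintype K] [DecidableEq K]

theorem Polynomial.card_filter_eval_eq_zero_le_natDegree {p : K[X]} (hp : p ≠ 0) :
    #{a | p.eval a = 0} ≤ p.natDegree :=
  calc #{a | p.eval a = 0} ≤ #p.roots.toFinset :=
        card_le_card fun a ha => by simpa [hp] using ha
    _ ≤ p.natDegree := (Multiset.toFinset_card_le _).trans (card_roots' p)

-- At the point `none` at infinity, `p` is read as a form of degree `k - 1`: its value there is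
-- the coefficient of `X ^ (k - 1)`.
variable (K) in
noncomputable def extendedEval (k : ℕ) : K[X] →ₗ[K] Option K → K :=
  LinearMap.pi fun o => o.elim (lcoeff K (k - 1)) leval

theorem card_filter_extendedEval_eq_zero_lt {k : ℕ} {p : K[X]} (hp : p ∈ degreeLT K k)
    (hp0 : p ≠ 0) : #{o | extendedEval K k p o = 0} < k := by
  have hdeg : p.natDegree < k := by
    rwa [mem_degreeLT, degree_eq_natDegree hp0, Nat.cast_lt] at hp
  have htop : p.coeff (k - 1) = 0 → p.natDegree ≠ k - 1 := fun h hk =>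
    hp0 (leadingCoeff_eq_zero.mp (by rwa [leadingCoeff, hk]))
  have hroots := card_filter_eval_eq_zero_le_natDegree hp0
  rw [card_filter_option]
  by_cases h : p.coeff (k - 1) = 0 <;>
    simp only [extendedEval, LinearMap.pi_apply, Option.elim, lcoeff_apply, leval_apply, h,
      if_true, if_false] <;> grind

theorem exists_code_extendedReedSolomon {k r s : ℕ} (hs : k + r = s)
    (hsK : s ≤ Fintype.card K + 1) :
    ∃ W : Submodule K (Fin s → K), finrank K W = k ∧
      ∀ c ∈ W, c ≠ 0 → r + 1 ≤ hammingNorm c := by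
  obtain ⟨ι⟩ : Nonempty (Fin s ↪ Option K) :=
    Function.Embedding.nonempty_of_card_le (by simpa using hsK)
  set Φ := LinearMap.funLeft K K ι ∘ₗ extendedEval K k ∘ₗ (degreeLT K k).subtype
  rw [← finrank_degreeLT K k]
  refine exists_code_range_of_le_hammingNorm Φ r.succ_pos fun p hp => ?_
  have hzeros : #{σ | Φ p σ = 0} ≤ #{o | extendedEval K k p o = 0} :=
    card_le_card_of_injOn ι (fun σ hσ => by simpa [Φ] using (mem_filter.mp hσ).2)
      ι.injective.injOn
  have := card_filter_extendedEval_eq_zero_lt p.2 (by simpa using hp)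
  rw [hammingNorm_eq_card_sub, Fintype.card_fin]
  omega

end ReedSolomon

section Hyperoval

variable {K : Type*} [Field K] [Fintype K] [DecidableEq K]

-- The conic `{(1, a, a²)}`, its point `(0, 0, 1)` at infinity and its nucleus `(0, 1, 0)`:
-- in characteristic `2`, no plane contains three of them.
def hyperoval : Option (Option K) → Fin 3 → K
  | none => ![0, 0, 1]
  | some none => ![0, 1, 0]
  | some (some a) => ![1, a, a ^ 2]

theorem card_filter_quadratic_eq_zero_add_le [CharP K 2] {a b c : K}
    (h : ¬(a = 0 ∧ b = 0 ∧ c = 0)) :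
    (if c = 0 then 1 else 0) + ((if b = 0 then 1 else 0) + #{x | a + b * x + c * x ^ 2 = 0})
      ≤ 2 := by
  by_cases hc : c = 0 <;> by_cases hb : b = 0
  · subst hb hc
    have ha : a ≠ 0 := fun ha => h ⟨ha, rfl, rfl⟩
    simp [ha]
  · subst hc
    have : #{x | a + b * x + 0 * x ^ 2 = 0} ≤ 1 := card_le_one.mpr fun x hx y hy => by
      simp only [mem_filter, mem_univ, true_and] at hx hy
      exact mul_left_cancel₀ hb (by linear_combination hx - hy)
    simp only [hb, if_true, if_false]
    omega
  · subst hb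
    have : #{x | a + 0 * x + c * x ^ 2 = 0} ≤ 1 := card_le_one.mpr fun x hx y hy => by
      simp only [mem_filter, mem_univ, true_and] at hx hy
      exact CharTwo.sq_inj.mp (mul_left_cancel₀ hc (by linear_combination hx - hy))
    simp only [hc, if_true, if_false]
    omega
  · set P : K[X] := C c * X ^ 2 + C b * X + C a
    have hP : P ≠ 0 := fun hP => hc (by simpa [P] using congrArg (coeff · 2) hP)
    have hsub : #{x | a + b * x + c * x ^ 2 = 0} ≤ #{x | P.eval x = 0} :=
      card_le_card fun x hx => by
        simp only [mem_filter, mem_univ, true_and, P, eval_add, eval_mul, eval_pow, eval_C,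
          eval_X] at hx ⊢
        linear_combination hx
    have := card_filter_eval_eq_zero_le_natDegree hP
    have : P.natDegree ≤ 2 := natDegree_quadratic_le
    simp only [hb, hc, if_false]
    omega

theorem card_filter_hyperoval_eq_zero_le_two [CharP K 2] {f : Dual K (Fin 3 → K)} (hf : f ≠ 0) :
    #{o | f (hyperoval o) = 0} ≤ 2 := by
  set c : Fin 3 → K := fun r => f (Pi.single r 1)
  have hfc : ∀ x, f x = x 0 * c 0 + x 1 * c 1 + x 2 * c 2 := fun x => by
    have hsingle : ∀ r : Fin 3, (fun j => if r = j then (1 : K) else 0) = Pi.single r 1 :=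
      fun r => by ext j; simp [Pi.single_apply, eq_comm]
    rw [LinearMap.pi_apply_eq_sum_univ f x, Fin.sum_univ_three]
    simp only [hsingle, smul_eq_mul, c]
  have hc : ¬(c 0 = 0 ∧ c 1 = 0 ∧ c 2 = 0) := fun ⟨h0, h1, h2⟩ =>
    hf (LinearMap.ext fun x => by simp [hfc, h0, h1, h2])
  rw [card_filter_option, card_filter_option]
  simpa [hyperoval, hfc, mul_comm] using card_filter_quadratic_eq_zero_add_le hc

theorem exists_code_hyperoval [CharP K 2] :
    ∃ W : Submodule K (Option (Option K) → K), finrank K W = 3 ∧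
      ∀ c ∈ W, c ≠ 0 → Fintype.card K ≤ hammingNorm c := by
  set Φ := LinearMap.pi fun o => Dual.eval K (Fin 3 → K) (hyperoval o)
  have h := exists_code_range_of_le_hammingNorm Φ (Fintype.card_pos (α := K)) fun f hf => by
    rw [hammingNorm_eq_card_sub, Fintype.card_option, Fintype.card_option]
    exact (Nat.sub_le_sub_left (card_filter_hyperoval_eq_zero_le_two hf) _).trans' (by omega)
  rwa [Subspace.dual_finrank_eq, finrank_fin_fun] at h

theorem exists_code_hyperoval_dual [CharP K 2] :
    ∃ W : Submodule K (Option (Option K) → K), finrank K W = Fintype.card K - 1 ∧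
      ∀ c ∈ W, c ≠ 0 → 4 ≤ hammingNorm c := by
  obtain ⟨W, hW, hw⟩ := exists_code_ker_of_card_filter_lt (hyperoval (K := K))
    (by rw [finrank_fin_fun, Fintype.card_option, Fintype.card_option]
        exact Nat.add_le_add_right (Fintype.card_pos (α := K)) 2)
    fun f hf =>
      (card_filter_hyperoval_eq_zero_le_two hf).trans_lt (by rw [finrank_fin_fun]; omega)
  rw [finrank_fin_fun, Fintype.card_option, Fintype.card_option] at hW
  rw [finrank_fin_fun] at hw
  exact ⟨W, by omega, hw⟩

end Hyperoval

theorem exists_labeled_code_of_code {F K ι : Type*} [Field F] [Field K] [DecidableEq K]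
    [Algebra F K] [Fintype ι] {j s k w : ℕ} (hj : 0 < j) (hK : finrank F K = j)
    (hι : Fintype.card ι = s) {W : Submodule K (ι → K)} (hW : finrank K W = k)
    (hw : ∀ x ∈ W, x ≠ 0 → w ≤ hammingNorm x) :
    ∃ (C : Submodule F (Fin (j * s) → F)) (L : Fin (j * s) → Fin s),
      Function.Surjective L ∧ finrank F C = j * k ∧ ∀ c ∈ C, c ≠ 0 → w ≤ labelWeight L c := by
  classical
  have : Module.Finite F K := Module.finite_of_finrank_pos (hK ▸ hj)
  let b := Module.finBasisOfFinrankEq F K hK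
  let e : ι ≃ Fin s := Fintype.equivFinOfCardEq hι
  let idx : Fin (j * s) ≃ Fin s × Fin j := (finCongr (mul_comm j s)).trans finProdFinEquiv.symm
  let T : (ι → K) ≃ₗ[F] (Fin (j * s) → F) :=
    LinearEquiv.piCongrRight (fun _ => b.equivFun) ≪≫ₗ (LinearEquiv.curry F F ι (Fin j)).symm ≪≫ₗ
      LinearEquiv.funCongrLeft F F (idx.trans (e.symm.prodCongr (Equiv.refl _)))
  let L : Fin (j * s) → Fin s := fun i => (idx i).1
  have hT : ∀ x i, T x i = b.equivFun (x (e.symm (L i))) (idx i).2 := fun x i => rfl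
  have hweight : ∀ x, labelWeight L (T x) = hammingNorm x := fun x => by
    refine card_equiv e.symm fun σ => ?_
    simp only [mem_image, mem_filter, mem_univ, true_and, hT]
    constructor
    · rintro ⟨i, hi, rfl⟩ hx
      simp [hx] at hi
    · intro hx
      obtain ⟨r, hr⟩ := Function.ne_iff.mp ((map_ne_zero_iff _ b.equivFun.injective).mpr hx)
      exact ⟨idx.symm (σ, r), by simpa [L] using hr, by simp [L]⟩
  refine ⟨(W.restrictScalars F).map T.toLinearMap, L,
    fun σ => ⟨idx.symm (σ, ⟨0, hj⟩), by simp [L]⟩, ?_, ?_⟩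
  · rw [LinearEquiv.finrank_map_eq, ← hK, ← hW, Module.finrank_mul_finrank F K W]
    exact ((Submodule.restrictScalarsEquiv F K (ι → K) W).restrictScalars F).finrank_eq
  · rintro _ ⟨x, hx, rfl⟩ hc
    exact (hw x hx (by rintro rfl; simp at hc)).trans_eq (hweight x).symm

theorem stmt_16_general {F : Type*} [Field F] [Fintype F] {q s d t j : ℕ}
    (hq : Fintype.card F = q)
    (hst : d * t < s) (hj : 0 < j)
    (hcond : s ≤ q ^ j + 1 ∨
      (Even (q ^ j) ∧ (s - d * t = 3 ∨ s - d * t = q ^ j - 1) ∧ s ≤ q ^ j + 2)) :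
    ∃ (C : Submodule F (Fin (j * s) → F)) (L : Fin (j * s) → Fin s),
      Function.Surjective L ∧
      Module.finrank F C = j * (s - d * t) ∧
      ∀ c ∈ C, c ≠ 0 → d * t + 1 ≤ labelWeight L c := by
  classical
  obtain ⟨p, _⟩ := CharP.exists F
  have : Fact p.Prime := ⟨CharP.char_is_prime F p⟩
  have : NeZero j := ⟨hj.ne'⟩
  let K := FiniteField.Extension F p j
  let : Fintype K := Fintype.ofFinite K
  have hK : finrank F K = j := FiniteField.finrank_extension F p j
  have hcardK : Fintype.card K = q ^ j := by rw [Module.card_eq_pow_finrank (K := F), hK, hq]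
  rcases le_or_gt s (q ^ j + 1) with hsK | hsK
  · obtain ⟨W, hW, hw⟩ := exists_code_extendedReedSolomon (K := K) (k := s - d * t) (r := d * t)
      (s := s) (by omega) (by rw [hcardK]; exact hsK)
    exact exists_labeled_code_of_code hj hK (Fintype.card_fin s) hW hw
  obtain ⟨heven, hsdt, hs2⟩ := hcond.resolve_left (by omega)
  have : CharP K 2 := ringChar.of_eq <|
    FiniteField.even_card_iff_char_two.mpr (Nat.even_iff.mp (hcardK ▸ heven))
  have hι : Fintype.card (Option (Option K)) = s := by
    simp only [Fintype.card_option]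
    omega
  rcases hsdt with hk | hdt
  · obtain ⟨W, hW, hw⟩ := exists_code_hyperoval (K := K)
    obtain ⟨C, L, hL, hC, hCw⟩ := exists_labeled_code_of_code hj hK hι hW hw
    exact ⟨C, L, hL, by rw [hC, hk], fun c hc hc0 => (hCw c hc hc0).trans' (by omega)⟩
  · obtain ⟨W, hW, hw⟩ := exists_code_hyperoval_dual (K := K)
    obtain ⟨C, L, hL, hC, hCw⟩ := exists_labeled_code_of_code hj hK hι hW hw
    exact ⟨C, L, hL, by rw [hC, hdt, hcardK],
      fun c hc hc0 => (hCw c hc hc0).trans' (by omega)⟩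

/-- Let F be a finite field with q elements and s, d, t positive
integers with s > dt.  Let j be a positive integer such that either q^j + 1 ≥ s, or
q^j is even, s − dt ∈ {3, q^j − 1}, and q^j + 2 ≥ s.  Then there exists a linear code
C ⊆ F^{js} of dimension j(s − dt) and a surjective labeling L : [js] → [s] under which
every nonzero codeword of C has labelweight at least dt + 1. -/
theorem stmt_16 {F : Type*} [Field F] [Fintype F] {q s d t j : ℕ}
    (hq : Fintype.card F = q)
    (hs : 0 < s) (hd : 0 < d) (ht : 0 < t) (hst : d * t < s) (hj : 0 < j)
    (hcond : s ≤ q ^ j + 1 ∨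
      (Even (q ^ j) ∧ (s - d * t = 3 ∨ s - d * t = q ^ j - 1) ∧ s ≤ q ^ j + 2)) :
    ∃ (C : Submodule F (Fin (j * s) → F)) (L : Fin (j * s) → Fin s),
      Function.Surjective L ∧
      Module.finrank F C = j * (s - d * t) ∧
      ∀ c ∈ C, c ≠ 0 → d * t + 1 ≤ labelWeight L c :=
  stmt_16_general hq hst hj hcond
end

section
/- Let F be a finite field with q elements and let s, d, t be positive integers with s − dt ≥ 2 and dt ≥ 2. Suppose there exists a linear code C ⊆ F^n of dimension ℓ satisfying ℓ·s = n·(s − dt), together with a surjective labeling L : [n] → [s] such that every nonzero codeword of C has labelweight at least dt + 1. Then (s − dt) divides ℓ, the integer j := ℓ/(s − dt) satisfies n = js, and moreover q^j ≥ s − dt + 1 and q^j ≥ dt + 1. -/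
open Finset Module

section LinearAlgebra

variable {F V W : Type*} [Field F] [AddCommGroup V] [Module F V] [AddCommGroup W] [Module F W]

theorem Submodule.finrank_map_add_finrank_inf_ker [FiniteDimensional F V] (D : Submodule F V)
    (g : V →ₗ[F] W) :
    finrank F (D.map g) + finrank F (D ⊓ LinearMap.ker g : Submodule F V) = finrank F D := by
  rw [← LinearMap.range_domRestrict, ← (Submodule.comapSubtypeEquivOfLe inf_le_left).finrank_eq,
    ← LinearMap.finrank_range_add_finrank_ker (g.domRestrict D), LinearMap.ker_domRestrict,
    Submodule.comap_inf, Submodule.comap_subtype_self, top_inf_eq]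

theorem Submodule.card_mul_pow_sub_one_le_of_pairwiseDisjoint [Fintype F] [Finite V]
    {κ : Type*} (D : Submodule F V) (I : Finset κ) (U : κ → Submodule F V)
    (hUD : ∀ i ∈ I, U i ≤ D) (hU : (I : Set κ).PairwiseDisjoint U) (j : ℕ)
    (hj : ∀ i ∈ I, j ≤ finrank F (U i)) :
    #I * (Fintype.card F ^ j - 1) ≤ Fintype.card F ^ finrank F D - 1 := by
  classical
  have := Fintype.ofFinite V
  have hcard (P : Submodule F V) : #{v | v ∈ P} = Fintype.card F ^ finrank F P := by
    rw [← Module.card_eq_pow_finrank, Fintype.card_subtype]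
  set S : κ → Finset V := fun i => ({v | v ∈ U i} : Finset V).erase 0
  have hS : (I : Set κ).PairwiseDisjoint S := by
    intro i hi i' hi' hii'
    refine disjoint_left.2 fun v hv hv' => ?_
    simp only [S, mem_erase, mem_filter, mem_univ, true_and] at hv hv'
    exact hv.1 ((Submodule.disjoint_def.1 (hU hi hi' hii')) v hv.2 hv'.2)
  calc #I * (Fintype.card F ^ j - 1) ≤ ∑ i ∈ I, #(S i) := by
        refine card_nsmul_le_sum _ _ _ fun i hi => ?_
        rw [card_erase_of_mem (by simp), hcard]
        exact Nat.sub_le_sub_right (Nat.pow_le_pow_right Fintype.card_pos (hj i hi)) 1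
    _ = #(I.biUnion S) := (card_biUnion hS).symm
    _ ≤ #(({v | v ∈ D} : Finset V).erase 0) := by
        refine card_le_card fun v hv => ?_
        obtain ⟨i, hi, hv⟩ := mem_biUnion.1 hv
        simp only [S, mem_erase, mem_filter, mem_univ, true_and] at hv ⊢
        exact ⟨hv.1, hUD i hi hv.2⟩
    _ = Fintype.card F ^ finrank F D - 1 := by rw [card_erase_of_mem (by simp), hcard]

theorem Submodule.card_le_pow_add_one_of_pairwiseDisjoint [Fintype F] [Finite V]
    {κ : Type*} (D : Submodule F V) (I : Finset κ) (U : κ → Submodule F V)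
    (hUD : ∀ i ∈ I, U i ≤ D) (hU : (I : Set κ).PairwiseDisjoint U) {j : ℕ} (hj0 : 0 < j)
    (hj : ∀ i ∈ I, j ≤ finrank F (U i)) (hD : finrank F D ≤ 2 * j) :
    #I ≤ Fintype.card F ^ j + 1 := by
  have h := D.card_mul_pow_sub_one_le_of_pairwiseDisjoint I U hUD hU j hj
  set Q := Fintype.card F ^ j
  have hQ : 1 < Q := Nat.one_lt_pow hj0.ne' Fintype.one_lt_card
  have hsq : Fintype.card F ^ finrank F D - 1 ≤ (Q + 1) * (Q - 1) := by
    have : Fintype.card F ^ finrank F D ≤ Q * Q := by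
      rw [← pow_add, ← two_mul]; exact Nat.pow_le_pow_right Fintype.card_pos hD
    zify [hQ.le, Nat.one_le_pow _ _ Fintype.card_pos] at this ⊢
    nlinarith
  exact Nat.le_of_mul_le_mul_right (h.trans hsq) (by omega)

end LinearAlgebra

section LabelVanishing

variable {F ι β : Type*} [Field F] {L : ι → β}

def labelVanishing (L : ι → β) (A : Finset β) : Submodule F (ι → F) :=
  Submodule.pi {i | L i ∈ A} fun _ => ⊥

@[simp]
theorem mem_labelVanishing {A : Finset β} {c : ι → F} :
    c ∈ labelVanishing L A ↔ ∀ i, L i ∈ A → c i = 0 := by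
  simp [labelVanishing, Submodule.mem_pi]

theorem labelVanishing_union [DecidableEq β] (A A' : Finset β) :
    labelVanishing (F := F) L (A ∪ A') = labelVanishing L A ⊓ labelVanishing L A' := by
  ext c
  simp [or_imp, forall_and]

theorem labelVanishing_antitone : Antitone (labelVanishing (F := F) L) := fun _ _ h _ hc => by
  simp only [mem_labelVanishing] at hc ⊢
  exact fun i hi => hc i (h hi)

@[simp]
theorem labelVanishing_empty : labelVanishing (F := F) L ∅ = ⊤ := by
  ext c
  simp

@[simp]
theorem labelVanishing_univ [Fintype β] : labelVanishing (F := F) L univ = ⊥ := by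
  ext c
  simp [funext_iff]

theorem mem_labelVanishing_erase [Fintype β] [DecidableEq β] {B : Finset β} {y : β}
    {a b : ι → F} (hb : b ∈ labelVanishing L {y}ᶜ) (hab : a - b ∈ labelVanishing L B) :
    a ∈ labelVanishing L (B.erase y) := by
  simp only [mem_labelVanishing, mem_compl, mem_singleton, mem_erase, Pi.sub_apply,
    sub_eq_zero] at hb hab ⊢
  intro i ⟨hiy, hiB⟩
  rw [hab i hiB, hb i hiy]

def restrictToLabels (L : ι → β) (B : Finset β) : (ι → F) →ₗ[F] ({i // L i ∈ B} → F) :=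
  LinearMap.funLeft F F Subtype.val

theorem ker_restrictToLabels (B : Finset β) :
    LinearMap.ker (restrictToLabels (F := F) L B) = labelVanishing L B := by
  ext c
  simp [restrictToLabels, funext_iff, LinearMap.funLeft_apply]

theorem disjoint_map_restrictToLabels {B : Finset β} {X Y : Submodule F (ι → F)}
    (h : ∀ a ∈ X, ∀ b ∈ Y, a - b ∈ labelVanishing L B → a ∈ labelVanishing L B) :
    Disjoint (X.map (restrictToLabels L B)) (Y.map (restrictToLabels L B)) := by
  rw [Submodule.disjoint_def]
  rintro _ ⟨a, ha, rfl⟩ ⟨b, hb, hba⟩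
  rw [← LinearMap.mem_ker, ker_restrictToLabels]
  refine h a ha b hb ?_
  rw [← ker_restrictToLabels, LinearMap.mem_ker, map_sub, hba, sub_self]

variable [Fintype ι] [DecidableEq β]

variable (L) in
theorem finrank_le_finrank_inf_labelVanishing_add (D : Submodule F (ι → F)) (A : Finset β) :
    finrank F D ≤ finrank F (D ⊓ labelVanishing L A : Submodule F (ι → F)) + #{i | L i ∈ A} := by
  have hrank := D.finrank_map_add_finrank_inf_ker (restrictToLabels L A)
  have hmap := Submodule.finrank_le (D.map (restrictToLabels L A))
  rw [ker_restrictToLabels] at hrank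
  rw [finrank_fintype_fun_eq_card, Fintype.card_subtype] at hmap
  omega

theorem card_filter_mem_eq_sum (A : Finset β) : #{i | L i ∈ A} = ∑ b ∈ A, #{i | L i = b} := by
  rw [card_eq_sum_card_fiberwise (f := L) (t := A) fun i hi => by simpa using hi]
  refine sum_congr rfl fun b hb => ?_
  congr 1
  ext i
  simp only [mem_filter, mem_univ, true_and, and_iff_right_iff_imp]
  exact fun h => h ▸ hb

theorem card_filter_mem_eq_card_mul {j : ℕ} (hL : ∀ b, #{i | L i = b} = j) (A : Finset β) :
    #{i | L i ∈ A} = #A * j := by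
  simp [card_filter_mem_eq_sum, hL]

theorem le_finrank_inf_labelVanishing {j m : ℕ} (hL : ∀ b, #{i | L i = b} = j)
    {D : Submodule F (ι → F)} (hD : m * j ≤ finrank F D) (A : Finset β) :
    (m - #A) * j ≤ finrank F (D ⊓ labelVanishing L A : Submodule F (ι → F)) := by
  have h := finrank_le_finrank_inf_labelVanishing_add L D A
  rw [card_filter_mem_eq_card_mul hL] at h
  rw [Nat.sub_mul]
  omega

end LabelVanishing

theorem Finset.sum_powersetCard_sum {α M : Type*} [DecidableEq α] [AddCommMonoid M]
    (s : Finset α) {k : ℕ} (hk : 0 < k) (f : α → M) :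
    ∑ A ∈ s.powersetCard k, ∑ a ∈ A, f a = (#s - 1).choose (k - 1) • ∑ a ∈ s, f a := by
  calc ∑ A ∈ s.powersetCard k, ∑ a ∈ A, f a
      = ∑ A ∈ s.powersetCard k, ∑ a ∈ s, if a ∈ A then f a else 0 := by
        refine sum_congr rfl fun A hA => ?_
        rw [sum_ite_mem, inter_eq_right.2 (mem_powersetCard.1 hA).1]
    _ = ∑ a ∈ s, #((s.powersetCard k).filter ({a} ⊆ ·)) • f a := by
        rw [sum_comm]
        refine sum_congr rfl fun a _ => ?_
        simp [sum_ite, sum_const]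
    _ = (#s - 1).choose (k - 1) • ∑ a ∈ s, f a := by
        rw [smul_sum]
        refine sum_congr rfl fun a ha => ?_
        rw [card_filter_powersetCard_subset _ _ _ (singleton_subset_iff.2 ha) (by simpa),
          card_singleton]

theorem Finset.sum_eq_of_le_sum_of_card_eq {α : Type*} [Fintype α] [DecidableEq α]
    {f : α → ℕ} {k c : ℕ} (hk : 0 < k) (hf : ∀ A : Finset α, #A = k → c ≤ ∑ a ∈ A, f a)
    (htot : c * Fintype.card α = k * ∑ a, f a) {A : Finset α} (hA : #A = k) :
    ∑ a ∈ A, f a = c := by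
  set P := (univ : Finset α).powersetCard k
  have hP : ∀ A ∈ P, c ≤ ∑ a ∈ A, f a := fun A hA => hf A (mem_powersetCard.1 hA).2
  suffices ∑ A ∈ P, c = ∑ A ∈ P, ∑ a ∈ A, f a from
    ((sum_eq_sum_iff_of_le hP).1 this A (mem_powersetCard.2 ⟨subset_univ A, hA⟩)).symm
  have hpascal := Nat.add_one_mul_choose_eq (Fintype.card α - 1) (k - 1)
  have hcard : 0 < Fintype.card α := by
    obtain ⟨a, -⟩ := card_pos.1 (hA ▸ hk : 0 < #A); exact Fintype.card_pos_iff.2 ⟨a⟩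
  rw [Nat.sub_add_cancel hcard, Nat.sub_add_cancel hk] at hpascal
  rw [sum_const, card_powersetCard, card_univ, sum_powersetCard_sum _ hk, card_univ, smul_eq_mul,
    smul_eq_mul]
  refine Nat.eq_of_mul_eq_mul_left hcard ?_
  calc Fintype.card α * ((Fintype.card α).choose k * c)
      = (Fintype.card α).choose k * k * ∑ a, f a := by rw [mul_assoc, ← htot]; ring
    _ = _ := by rw [← hpascal]; ring

theorem Finset.forall_eq_of_le_sum_of_card_eq {α : Type*} [Fintype α] [DecidableEq α]
    {f : α → ℕ} {k c : ℕ} (hk : 0 < k) (hkα : k < Fintype.card α)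
    (hf : ∀ A : Finset α, #A = k → c ≤ ∑ a ∈ A, f a)
    (htot : c * Fintype.card α = k * ∑ a, f a) (a b : α) : f a = f b := by
  obtain rfl | hab := eq_or_ne a b
  · rfl
  obtain ⟨T, hT, hTcard⟩ := exists_subset_card_eq (s := (univ.erase a).erase b) (n := k - 1)
    (by rw [card_erase_of_mem (by simpa using hab.symm), card_erase_of_mem (mem_univ a),
      card_univ]; omega)
  have ha : a ∉ T := fun h => by simpa using hT h
  have hb : b ∉ T := fun h => by simpa using hT h
  have hsum := fun x (hx : x ∉ T) =>
    sum_eq_of_le_sum_of_card_eq hk hf htot (A := insert x T)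
      (by rw [card_insert_of_notMem hx, hTcard]; omega)
  have := (hsum a ha).trans (hsum b hb).symm
  rwa [sum_insert ha, sum_insert hb, add_left_inj] at this

section BlockCodes

variable {F ι β : Type*} [Field F]

def BlocksDetermine (L : ι → β) (C : Submodule F (ι → F)) (k : ℕ) : Prop :=
  ∀ A : Finset β, k ≤ #A → Disjoint C (labelVanishing L A)

theorem blocksDetermine_of_le_labelWeight [Fintype ι] {s m : ℕ} {L : ι → Fin s}
    {C : Submodule F (ι → F)} (hwt : ∀ c ∈ C, c ≠ 0 → m + 1 ≤ labelWeight L c) :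
    BlocksDetermine L C (s - m) := by
  classical
  refine fun A hA => Submodule.disjoint_def.2 fun c hc hcA => by_contra fun hc0 => ?_
  have hle : labelWeight L c ≤ #Aᶜ := by
    refine card_le_card fun a ha => ?_
    obtain ⟨i, hi, rfl⟩ := mem_image.1 ha
    exact mem_compl.2 fun hiA => (mem_filter.1 hi).2 (mem_labelVanishing.1 hcA i hiA)
  have := hwt c hc hc0
  rw [card_compl, Fintype.card_fin] at hle
  omega

variable [DecidableEq β] {L : ι → β} {C : Submodule F (ι → F)} {k : ℕ}

theorem BlocksDetermine.disjoint_inf (hC : BlocksDetermine L C k) {A A' : Finset β}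
    (hA : k ≤ #(A ∪ A')) : Disjoint (C ⊓ labelVanishing L A) (C ⊓ labelVanishing L A') := by
  rw [disjoint_iff, inf_inf_inf_comm, inf_idem, ← labelVanishing_union]
  exact (hC _ hA).eq_bot

theorem BlocksDetermine.finrank_inf_le [Fintype ι] (hC : BlocksDetermine L C k)
    {A A' : Finset β} (hA : k ≤ #(A ∪ A')) :
    finrank F (C ⊓ labelVanishing L A : Submodule F (ι → F)) ≤ #{i | L i ∈ A'} := by
  have h := finrank_le_finrank_inf_labelVanishing_add L (C ⊓ labelVanishing L A) A'
  rwa [inf_assoc, ← labelVanishing_union, (hC _ hA).eq_bot, finrank_bot, zero_add] at h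

theorem BlocksDetermine.card_fiber_eq [Fintype ι] [Fintype β] (hC : BlocksDetermine L C k)
    (hk : 0 < k) (hkβ : k < Fintype.card β)
    (hrate : finrank F C * Fintype.card β = k * Fintype.card ι) (b b' : β) :
    #{i | L i = b} = #{i | L i = b'} := by
  refine forall_eq_of_le_sum_of_card_eq (f := fun b => #{i | L i = b}) (c := finrank F C)
    hk hkβ (fun A hA => ?_) ?_ b b'
  · have h := hC.finrank_inf_le (A := ∅) (A' := A) (by rw [empty_union, hA])
    rwa [labelVanishing_empty, inf_top_eq, card_filter_mem_eq_sum] at h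
  · simpa [← card_filter_mem_eq_sum] using hrate

theorem BlocksDetermine.card_sub_add_one_le [Fintype F] [Fintype ι] [Fintype β] {j : ℕ}
    (hC : BlocksDetermine L C k) (hk : 2 ≤ k) (hkβ : k ≤ Fintype.card β)
    (hL : ∀ b, #{i | L i = b} = j) (hj : 0 < j) (hdim : k * j ≤ finrank F C) :
    Fintype.card β - k + 1 ≤ Fintype.card F ^ j := by
  obtain ⟨Z, -, hZ⟩ := exists_subset_card_eq (s := (univ : Finset β)) (n := k - 2)
    (by rw [card_univ]; omega)
  have hZc : #Zᶜ = Fintype.card β - k + 2 := by rw [card_compl, hZ]; omega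
  have hcard : ∀ b ∈ Zᶜ, ∀ b' ∈ Zᶜ, b ≠ b' → k ≤ #(Z ∪ {b, b'}) := by
    intro b hb b' hb' hbb'
    rw [card_union_of_disjoint (disjoint_insert_right.2
      ⟨mem_compl.1 hb, disjoint_singleton_right.2 (mem_compl.1 hb')⟩), hZ, card_pair hbb']
    omega
  let U : β → Submodule F (ι → F) := fun b => C ⊓ labelVanishing L (insert b Z)
  have hU : ((Zᶜ : Finset β) : Set β).PairwiseDisjoint U := by
    intro b hb b' hb' hbb'
    refine hC.disjoint_inf ((hcard b hb b' hb' hbb').trans_eq (congrArg card ?_))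
    ext
    simp only [mem_union, mem_insert, mem_singleton]
    tauto
  have hUdim : ∀ b ∈ Zᶜ, j ≤ finrank F (U b) := by
    intro b hb
    have h := le_finrank_inf_labelVanishing hL hdim (insert b Z)
    rwa [card_insert_of_notMem (mem_compl.1 hb), hZ, show k - (k - 2 + 1) = 1 by omega,
      one_mul] at h
  have hD : finrank F (C ⊓ labelVanishing L Z : Submodule F (ι → F)) ≤ 2 * j := by
    obtain ⟨b, hb, b', hb', hbb'⟩ := one_lt_card.1 (by omega : 1 < #Zᶜ)
    have h := hC.finrank_inf_le (hcard b hb b' hb' hbb')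
    rwa [card_filter_mem_eq_card_mul hL, card_pair hbb'] at h
  have := Submodule.card_le_pow_add_one_of_pairwiseDisjoint _ _ U
    (fun b _ => inf_le_inf_left C (labelVanishing_antitone (subset_insert b Z))) hU hj hUdim hD
  omega

theorem BlocksDetermine.disjoint_map_restrictToLabels_inf_erase (hC : BlocksDetermine L C k)
    {T B : Finset β} (hT : k ≤ #T) (hB : 2 ≤ #B) (hTB : Disjoint T B) {x y : β} (hx : x ∈ T)
    (hy : y ∈ T) (hxy : x ≠ y) :
    Disjoint ((C ⊓ labelVanishing L (T.erase x)).map (restrictToLabels L B))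
      ((C ⊓ labelVanishing L (T.erase y)).map (restrictToLabels L B)) := by
  refine disjoint_map_restrictToLabels fun a ha b hb hab => ?_
  have hTxy : Disjoint ((T.erase x).erase y) B :=
    disjoint_of_subset_left ((erase_subset _ _).trans (erase_subset _ _)) hTB
  have hsub : a - b ∈ labelVanishing L ((T.erase x).erase y ∪ B) := by
    rw [labelVanishing_union]
    refine ⟨sub_mem (labelVanishing_antitone (erase_subset _ _) ha.2)
      (labelVanishing_antitone ?_ hb.2), hab⟩
    rw [erase_right_comm]
    exact erase_subset _ _
  have hab0 := Submodule.disjoint_def.1 (hC _ ?_) _ (sub_mem ha.1 hb.1) hsub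
  · rw [sub_eq_zero] at hab0
    subst hab0
    rw [Submodule.disjoint_def.1 (hC.disjoint_inf ?_) a ha hb]
    · exact zero_mem _
    rwa [erase_union_of_mem (mem_erase.2 ⟨hxy, hx⟩), union_eq_left.2 (erase_subset _ _)]
  rw [card_union_of_disjoint hTxy, card_erase_of_mem (mem_erase.2 ⟨Ne.symm hxy, hy⟩),
    card_erase_of_mem hx]
  omega

theorem BlocksDetermine.pairwiseDisjoint_map_restrictToLabels [Fintype β]
    (hC : BlocksDetermine L C k) {T B : Finset β} (hT : k ≤ #T) (hB : 2 ≤ #B)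
    (hTB : Disjoint T B) :
    ((T ∪ B : Finset β) : Set β).PairwiseDisjoint fun x =>
      (if x ∈ T then C ⊓ labelVanishing L (T.erase x) else labelVanishing L {x}ᶜ).map
        (restrictToLabels L B) := by
  have hBT : ∀ x ∈ B, x ∉ T := fun x hx hxT => disjoint_left.1 hTB hxT hx
  rw [coe_union, Set.pairwiseDisjoint_union]
  refine ⟨fun x hx y hy hxy => ?_, fun x hx y hy hxy => ?_, fun x hx y hy hxy => ?_⟩ <;>
    simp only [Function.onFun, mem_coe] at hx hy ⊢
  · rw [if_pos hx, if_pos hy]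
    exact hC.disjoint_map_restrictToLabels_inf_erase hT hB hTB hx hy hxy
  · rw [if_neg (hBT x hx), if_neg (hBT y hy)]
    refine disjoint_map_restrictToLabels fun a ha b hb hab => ?_
    have h := Submodule.mem_inf.2 ⟨ha, mem_labelVanishing_erase hb hab⟩
    rw [← labelVanishing_union, show {x}ᶜ ∪ B.erase y = univ by
      ext z; by_cases hz : z = x <;> simp [hz, hxy, hx], labelVanishing_univ] at h
    rw [(Submodule.mem_bot F).1 h]
    exact zero_mem _
  · rw [if_pos hx, if_neg (hBT y hy)]
    refine disjoint_map_restrictToLabels fun a ha b hb hab => ?_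
    have h := Submodule.disjoint_def.1 (hC (T.erase x ∪ B.erase y) ?_) a ha.1 ?_
    · rw [h]
      exact zero_mem _
    · rw [card_union_of_disjoint (disjoint_of_subset_left (erase_subset _ _)
        (disjoint_of_subset_right (erase_subset _ _) hTB)), card_erase_of_mem hx,
        card_erase_of_mem hy]
      omega
    · rw [labelVanishing_union]
      exact ⟨ha.2, mem_labelVanishing_erase hb hab⟩

theorem BlocksDetermine.add_one_le [Fintype F] [Fintype ι] [Fintype β] {j : ℕ}
    (hC : BlocksDetermine L C k) (hkβ : k + 2 ≤ Fintype.card β)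
    (hL : ∀ b, #{i | L i = b} = j) (hj : 0 < j) (hdim : k * j ≤ finrank F C) :
    k + 1 ≤ Fintype.card F ^ j := by
  obtain ⟨T, -, hT⟩ := exists_subset_card_eq (s := (univ : Finset β)) (n := k)
    (by rw [card_univ]; omega)
  obtain ⟨B, hBT, hB⟩ := exists_subset_card_eq (s := Tᶜ) (n := 2) (by rw [card_compl]; omega)
  have hTB : Disjoint T B := disjoint_of_subset_right hBT disjoint_compl_right
  set X : β → Submodule F (ι → F) := fun x =>
    if x ∈ T then C ⊓ labelVanishing L (T.erase x) else labelVanishing L {x}ᶜ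
  have hX : ∀ x ∈ T ∪ B, Disjoint (X x) (labelVanishing L B) ∧ j ≤ finrank F (X x) := by
    intro x hx
    by_cases hxT : x ∈ T
    · rw [show X x = C ⊓ labelVanishing L (T.erase x) from if_pos hxT]
      have hk : 0 < k := hT ▸ card_pos.2 ⟨x, hxT⟩
      have hdisj : Disjoint (T.erase x) B := disjoint_of_subset_left (erase_subset _ _) hTB
      refine ⟨?_, ?_⟩
      · rw [disjoint_iff, inf_assoc, ← labelVanishing_union]
        exact (hC _ (by rw [card_union_of_disjoint hdisj, card_erase_of_mem hxT]; omega)).eq_bot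
      · have h := le_finrank_inf_labelVanishing hL hdim (T.erase x)
        rwa [card_erase_of_mem hxT, hT, show k - (k - 1) = 1 by omega, one_mul] at h
    · have hxB : x ∈ B := (mem_union.1 hx).resolve_left hxT
      rw [show X x = labelVanishing L {x}ᶜ from if_neg hxT]
      refine ⟨?_, ?_⟩
      · rw [disjoint_iff, ← labelVanishing_union, show {x}ᶜ ∪ B = univ by
          ext z; by_cases hz : z = x <;> simp [hz, hxB], labelVanishing_univ]
      · have hι : Fintype.card β * j ≤ finrank F (⊤ : Submodule F (ι → F)) := by
          simpa using (card_filter_mem_eq_card_mul hL univ).ge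
        have h := le_finrank_inf_labelVanishing hL hι {x}ᶜ
        rwa [top_inf_eq, card_compl, card_singleton,
          show Fintype.card β - (Fintype.card β - 1) = 1 by omega, one_mul] at h
  have hV : finrank F (⊤ : Submodule F ({i // L i ∈ B} → F)) ≤ 2 * j := by
    rw [finrank_top, finrank_fintype_fun_eq_card, Fintype.card_subtype,
      card_filter_mem_eq_card_mul hL, hB]
  have := Submodule.card_le_pow_add_one_of_pairwiseDisjoint ⊤ (T ∪ B) _ (fun _ _ => le_top)
    (hC.pairwiseDisjoint_map_restrictToLabels hT.ge hB.ge hTB) hj (fun x hx => ?_) hV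
  · rw [card_union_of_disjoint hTB, hT, hB] at this
    omega
  · have h := (X x).finrank_map_add_finrank_inf_ker (restrictToLabels L B)
    rw [ker_restrictToLabels, (hX x hx).1.eq_bot, finrank_bot, add_zero] at h
    exact h ▸ (hX x hx).2

end BlockCodes

theorem stmt_17_general {F : Type*} [Field F] [Fintype F] {q n s d t ℓ : ℕ}
    (hq : Fintype.card F = q)
    (hsdt : 2 ≤ s - d * t) (hdt : 2 ≤ d * t)
    (C : Submodule F (Fin n → F)) (hdim : Module.finrank F C = ℓ)
    (hrate : ℓ * s = n * (s - d * t))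
    (L : Fin n → Fin s) (hL : Function.Surjective L)
    (hwt : ∀ c ∈ C, c ≠ 0 → d * t + 1 ≤ labelWeight L c) :
    (s - d * t) ∣ ℓ ∧ n = (ℓ / (s - d * t)) * s ∧
      s - d * t + 1 ≤ q ^ (ℓ / (s - d * t)) ∧
      d * t + 1 ≤ q ^ (ℓ / (s - d * t)) := by
  set k := s - d * t
  have hC : BlocksDetermine L C k := blocksDetermine_of_le_labelWeight hwt
  have hfib := hC.card_fiber_eq (by omega) (by rw [Fintype.card_fin]; omega)
    (by simp [hdim, hrate, mul_comm])
  obtain ⟨i₀, -⟩ := hL ⟨0, by omega⟩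
  set j := #{i | L i = L i₀}
  have hLj : ∀ b, #{i | L i = b} = j := fun b => hfib b (L i₀)
  have hj : 0 < j := card_pos.2 ⟨i₀, by simp⟩
  have hn : n = s * j := by simpa using card_filter_mem_eq_card_mul hLj univ
  have hℓ : ℓ = k * j := Nat.eq_of_mul_eq_mul_right (by omega : 0 < s) (by rw [hrate, hn]; ring)
  have hdiv : ℓ / k = j := by rw [hℓ]; exact Nat.mul_div_cancel_left j (by omega)
  have hdimC : k * j ≤ finrank F C := by rw [hdim, hℓ]
  have hdt_le := hC.card_sub_add_one_le (by omega) (by rw [Fintype.card_fin]; omega) hLj hj hdimC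
  rw [Fintype.card_fin] at hdt_le
  rw [hdiv, ← hq]
  exact ⟨⟨j, hℓ⟩, by rw [hn, mul_comm],
    hC.add_one_le (by rw [Fintype.card_fin]; omega) hLj hj hdimC, by omega⟩

/-- Let F be a finite field with q elements and s, d, t positive
integers with s − dt ≥ 2 and dt ≥ 2.  Suppose there is a linear code C ⊆ F^n of
dimension ℓ with ℓ·s = n·(s − dt) and a surjective labeling L : [n] → [s] under which
every nonzero codeword of C has labelweight at least dt + 1.  Then (s − dt) divides ℓ,
the integer j := ℓ/(s − dt) satisfies n = js, and q^j ≥ s − dt + 1 and q^j ≥ dt + 1. -/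
theorem stmt_17 {F : Type*} [Field F] [Fintype F] {q n s d t ℓ : ℕ}
    (hq : Fintype.card F = q)
    (hs : 0 < s) (hd : 0 < d) (ht : 0 < t)
    (hsdt : 2 ≤ s - d * t) (hdt : 2 ≤ d * t)
    (C : Submodule F (Fin n → F)) (hdim : Module.finrank F C = ℓ)
    (hrate : ℓ * s = n * (s - d * t))
    (L : Fin n → Fin s) (hL : Function.Surjective L)
    (hwt : ∀ c ∈ C, c ≠ 0 → d * t + 1 ≤ labelWeight L c) :
    (s - d * t) ∣ ℓ ∧ n = (ℓ / (s - d * t)) * s ∧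
      s - d * t + 1 ≤ q ^ (ℓ / (s - d * t)) ∧
      d * t + 1 ≤ q ^ (ℓ / (s - d * t)) :=
  stmt_17_general hq hsdt hdt C hdim hrate L hL hwt
end
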